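/- arXiv:2301.04340 — 16 statements merged into one kernel-verified Lean document; each statement's English description precedes it below -/
import Mathlib

section
/- For every n ≥ 1 and every profile x ∈ [0,1]^n there exists a facility location y ∈ [0,1] with |y − x_i| ≥ 1/(2n) for all agents i (a 2-IFS solution always exists). Moreover, for every real α with 0 < α < 2 there exist n ≥ 1 and a profile x ∈ [0,1]^n such that no y ∈ [0,1] satisfies |y − x_i| ≥ 1/(αn) for all i. Hence α = 2 is the lowest value of α for which an α-IFS solution always exists. -/
/-!
Place candidate facilities on the grid `0, 1/n, …, 1`: these `n + 1` points are pairwise `1/n`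
apart, so an agent within `1/(2n)` of two of them would contradict the triangle inequality.
With only `n` agents, pigeonhole leaves a grid point at distance at least `1/(2n)` from everyone.
For optimality, a single agent at `1/2` is within `1/2 < 1/α` of every point of `[0, 1]`.
-/

open Set

theorem exists_forall_half_le_abs_sub {ι κ : Type*} [Fintype ι] [Fintype κ] {d : ℝ}
    (p : ι → ℝ) (hp : Pairwise fun k l => d ≤ |p k - p l|) (x : κ → ℝ)
    (hcard : Fintype.card κ < Fintype.card ι) : ∃ k, ∀ i, d / 2 ≤ |p k - x i| := by
  by_contra! hnear
  choose f hf using hnear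
  obtain ⟨k, l, hkl, hfkl⟩ := Fintype.exists_ne_map_eq_of_card_lt f hcard
  have hl := hf l
  rw [← hfkl, abs_sub_comm] at hl
  have := (hp hkl).trans (abs_sub_le (p k) (x (f k)) (p l))
  linarith [hf k]

theorem pairwise_one_div_le_abs_sub_grid (n : ℕ) :
    Pairwise fun k l : Fin (n + 1) => 1 / (n : ℝ) ≤ |(k : ℝ) / n - (l : ℝ) / n| := by
  intro k l hkl
  have hint : (1 : ℝ) ≤ |(k : ℝ) - l| := by
    exact_mod_cast Int.one_le_abs (sub_ne_zero.mpr (by omega : (k : ℤ) ≠ l))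
  rw [← sub_div, abs_div, Nat.abs_cast]
  exact div_le_div_of_nonneg_right hint n.cast_nonneg

theorem grid_mem_Icc {n : ℕ} (hn : 1 ≤ n) (k : Fin (n + 1)) : (k : ℝ) / n ∈ Icc (0 : ℝ) 1 := by
  have hpos : (0 : ℝ) < n := by exact_mod_cast hn
  refine ⟨by positivity, (div_le_one hpos).mpr ?_⟩
  exact_mod_cast Nat.lt_succ_iff.mp k.isLt

theorem abs_sub_half_le_half {y : ℝ} (hy : y ∈ Icc (0 : ℝ) 1) : |y - 1 / 2| ≤ 1 / 2 :=
  abs_le.mpr ⟨by linarith [hy.1], by linarith [hy.2]⟩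

/-- A 2-IFS solution always exists, and α = 2 is the lowest value of α for which
an α-IFS solution always exists. -/
theorem two_IFS_exists_and_optimal :
    (∀ (n : ℕ) (x : Fin n → ℝ), 1 ≤ n → (∀ i, x i ∈ Set.Icc (0:ℝ) 1) →
      ∃ y ∈ Set.Icc (0:ℝ) 1, ∀ i, 1 / (2 * n) ≤ |y - x i|) ∧
    (∀ α : ℝ, 0 < α → α < 2 →
      ∃ (n : ℕ) (x : Fin n → ℝ), 1 ≤ n ∧ (∀ i, x i ∈ Set.Icc (0:ℝ) 1) ∧
        ∀ y ∈ Set.Icc (0:ℝ) 1, ∃ i, |y - x i| < 1 / (α * n)) := by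
  constructor
  · intro n x hn _
    obtain ⟨k, hk⟩ := exists_forall_half_le_abs_sub _ (pairwise_one_div_le_abs_sub_grid n) x
      (by simp)
    refine ⟨(k : ℝ) / n, grid_mem_Icc hn k, fun i => ?_⟩
    rw [mul_comm, ← div_div]
    exact hk i
  · intro α hα hα2
    refine ⟨1, fun _ => 1 / 2, le_rfl, fun _ => ⟨by norm_num, by norm_num⟩, fun y hy => ⟨0, ?_⟩⟩
    have : (1 : ℝ) / 2 < 1 / (α * (1 : ℕ)) := by
      rw [Nat.cast_one, mul_one]
      exact one_div_lt_one_div_of_lt hα hα2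
    exact (abs_sub_half_le_half hy).trans_lt this
end

section
/- For every n ≥ 1 and every profile x ∈ [0,1]^n there exists a facility location y ∈ [0,1] such that for every point p ∈ [0,1], |y − p| ≥ |{i : x_i = p}|/(2n) (a 2-UFS solution always exists). Moreover, for every real α with 0 < α < 2 there exist n ≥ 1 and a profile x ∈ [0,1]^n (for instance all n agents located at 1/2) such that no y ∈ [0,1] satisfies |y − p| ≥ |{i : x_i = p}|/(αn) for all p ∈ [0,1]. Hence α = 2 is the lowest value of α for which an α-UFS solution always exists. -/
open Classical in
/-- A 2-UFS solution always exists, and α = 2 is the lowest value of α for which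
an α-UFS solution always exists. -/
theorem two_UFS_exists_and_optimal :
    (∀ (n : ℕ) (x : Fin n → ℝ), 1 ≤ n → (∀ i, x i ∈ Set.Icc (0:ℝ) 1) →
      ∃ y ∈ Set.Icc (0:ℝ) 1, ∀ p ∈ Set.Icc (0:ℝ) 1,
        ((Finset.univ.filter (fun i => x i = p)).card : ℝ) / (2 * n) ≤ |y - p|) ∧
    (∀ α : ℝ, 0 < α → α < 2 →
      ∃ (n : ℕ) (x : Fin n → ℝ), 1 ≤ n ∧ (∀ i, x i ∈ Set.Icc (0:ℝ) 1) ∧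
        ∀ y ∈ Set.Icc (0:ℝ) 1, ∃ p ∈ Set.Icc (0:ℝ) 1,
          |y - p| < ((Finset.univ.filter (fun i => x i = p)).card : ℝ) / (α * n)) := by
  constructor
  · -- Existence: pigeonhole over the n+1 grid points k/n.
      intro n x hn hx
      by_contra hcon
      push_neg at hcon
      have hn' : (0:ℝ) < n := by exact_mod_cast hn
      set m : ℝ → ℕ := fun p => (Finset.univ.filter (fun i => x i = p)).card with hm
      -- for each grid point k/n there is a bad location p k
      have H : ∀ k : Fin (n+1), ∃ q ∈ Set.Icc (0:ℝ) 1,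
          |((k : ℕ) : ℝ)/n - q| < (m q : ℝ) / (2*n) := by
        intro k
        have hk0 : (0:ℝ) ≤ (k : ℕ)/n := by positivity
        have hk1 : ((k : ℕ) : ℝ)/n ≤ 1 := by
          rw [div_le_one hn']
          exact_mod_cast Nat.lt_succ_iff.mp k.isLt
        exact hcon _ ⟨hk0, hk1⟩
      choose p hp1 hp2 using H
      -- each fiber of p has at most m q elements
      have hfib : ∀ q : ℝ, (Finset.univ.filter (fun k : Fin (n+1) => p k = q)).card ≤ m q := by
        intro q
        set S := Finset.univ.filter (fun k : Fin (n+1) => p k = q) with hS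
        rcases S.eq_empty_or_nonempty with he | hne
        · simp [he]
        · set a := S.min' hne with ha
          have haS : a ∈ S := S.min'_mem hne
          have hbad : ∀ k ∈ S, |((k : ℕ) : ℝ)/n - q| < (m q : ℝ) / (2*n) := by
            intro k hk
            have : p k = q := by simpa [hS] using hk
            rw [← this]
            exact hp2 k
          have key : ∀ k ∈ S, (k : ℕ) < (a : ℕ) + m q := by
            intro k hk
            have h1 := hbad k hk
            have h2 := hbad a haS
            rw [abs_lt] at h1 h2
            have hlt : ((k : ℕ) : ℝ) < (a : ℕ) + m q := by
              have e1 : ((k:ℕ):ℝ)/n - ((a:ℕ):ℝ)/n < (m q : ℝ)/n := by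
                have := h1.2; have := h2.1
                have : ((k:ℕ):ℝ)/n - ((a:ℕ):ℝ)/n < (m q : ℝ)/(2*n) + (m q : ℝ)/(2*n) := by
                  linarith
                linarith [this, (by ring : (m q : ℝ)/(2*n) + (m q : ℝ)/(2*n) = (m q : ℝ)/n)]
              have := mul_lt_mul_of_pos_right (sub_lt_iff_lt_add.mp e1) hn'
              calc ((k:ℕ):ℝ) = ((k:ℕ):ℝ)/n * n := by field_simp
                _ < ((m q : ℝ)/n + ((a:ℕ):ℝ)/n) * n := this
                _ = (a : ℕ) + m q := by field_simp; ring
            exact_mod_cast hlt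
          calc S.card = (S.image (Fin.val)).card :=
                (Finset.card_image_of_injective _ Fin.val_injective).symm
            _ ≤ (Finset.Ico (a : ℕ) ((a : ℕ) + m q)).card := by
                apply Finset.card_le_card
                intro j hj
                obtain ⟨k, hkS, rfl⟩ := Finset.mem_image.mp hj
                rw [Finset.mem_Ico]
                exact ⟨S.min'_le k hkS, key k hkS⟩
            _ = m q := by simp
      -- image p ⊆ image x
      have himg : Finset.univ.image p ⊆ Finset.univ.image x := by
        intro q hq
        obtain ⟨k, _, rfl⟩ := Finset.mem_image.mp hq
        have hmq : 0 < m (p k) := by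
          by_contra h0
          push_neg at h0
          have : m (p k) = 0 := Nat.le_zero.mp h0
          have h5 := hp2 k
          rw [this] at h5
          simp only [Nat.cast_zero, zero_div] at h5
          linarith [abs_nonneg (((k:ℕ):ℝ)/n - p k)]
        rw [hm] at hmq
        obtain ⟨i, hi⟩ := Finset.card_pos.mp hmq
        have := Finset.mem_filter.mp hi
        exact Finset.mem_image.mpr ⟨i, Finset.mem_univ i, this.2⟩
      -- counting
      have h1 : (Finset.univ : Finset (Fin (n+1))).card =
          ∑ q ∈ Finset.univ.image p, (Finset.univ.filter (fun k => p k = q)).card :=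
        Finset.card_eq_sum_card_fiberwise (fun k _ => Finset.mem_image_of_mem p (Finset.mem_univ k))
      have h2 : (Finset.univ : Finset (Fin n)).card =
          ∑ q ∈ Finset.univ.image x, (Finset.univ.filter (fun i => x i = q)).card :=
        Finset.card_eq_sum_card_fiberwise (fun i _ => Finset.mem_image_of_mem x (Finset.mem_univ i))
      have h3 : ∑ q ∈ Finset.univ.image p, (Finset.univ.filter (fun k => p k = q)).card ≤
          ∑ q ∈ Finset.univ.image p, m q := Finset.sum_le_sum (fun q _ => hfib q)
      have h4 : ∑ q ∈ Finset.univ.image p, m q ≤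
          ∑ q ∈ Finset.univ.image x, (Finset.univ.filter (fun i => x i = q)).card :=
        Finset.sum_le_sum_of_subset himg
      simp only [Finset.card_univ, Fintype.card_fin] at h1 h2
      omega
  · -- Optimality: n = 1 agent at 1/2 defeats any α < 2.
      intro α hα hα2
      refine ⟨1, fun _ => (1:ℝ)/2, le_refl 1, fun i => ⟨by norm_num, by norm_num⟩, ?_⟩
      intro y hy
      refine ⟨1/2, ⟨by norm_num, by norm_num⟩, ?_⟩
      have hcard : ((Finset.univ.filter (fun _ : Fin 1 => (1:ℝ)/2 = 1/2)).card : ℝ) = 1 := by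
        simp
      rw [hcard]
      have h1 : |y - 1/2| ≤ 1/2 := by
        rw [abs_le]; constructor <;> [linarith [hy.1]; linarith [hy.2]]
      have h2 : (1:ℝ)/2 < 1 / (α * 1) := by
        rw [mul_one, lt_div_iff₀ hα]; linarith
      push_cast
      linarith
end

section
/- For every ε > 0 there exist n ≥ 1 and a profile x ∈ [0,1]^n such that for every y ∈ [0,1] satisfying 2-IFS, sup_{z ∈ [0,1]} ∑_i |z − x_i| ≥ (2 − ε) · ∑_i |y − x_i|. In other words, the price of 2-IFS for utilitarian welfare is at least 2. -/
/-- The price of 2-IFS for utilitarian welfare is at least 2. -/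
theorem price_of_two_IFS_UW_lower :
    ∀ ε : ℝ, 0 < ε →
      ∃ (n : ℕ) (x : Fin n → ℝ), 1 ≤ n ∧ (∀ i, x i ∈ Set.Icc (0:ℝ) 1) ∧
        ∀ y ∈ Set.Icc (0:ℝ) 1, (∀ i, 1 / (2 * n) ≤ |y - x i|) →
          (2 - ε) * ∑ i, |y - x i| ≤
            sSup ((fun z => ∑ i, |z - x i|) '' Set.Icc (0:ℝ) 1) := by
  intro ε hε
  obtain ⟨η, hη0, hη1, hη2⟩ : ∃ η : ℝ, 0 < η ∧ η ≤ ε/4 ∧ η ≤ 1/4 :=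
    ⟨min (ε/4) (1/4), lt_min (by linarith) (by norm_num), min_le_left _ _, min_le_right _ _⟩
  refine ⟨2, ![1/4 - η/2, 3/4 + η/2], one_le_two, ?_, ?_⟩
  · intro i
    fin_cases i <;> constructor <;> simp <;> linarith
  · intro y hy hIFS
    obtain ⟨hy0, hy1⟩ := hy
    have h0 := hIFS 0
    have h1 := hIFS 1
    have hc0 : (1 / (2 * ((2:ℕ):ℝ)) : ℝ) = 1/4 := by norm_num
    rw [hc0] at h0 h1
    simp only [Matrix.cons_val_zero, Matrix.cons_val_one, Matrix.head_cons] at h0 h1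
    have hya : 1/2 - η/2 ≤ y := by
      rcases abs_cases (y - (1/4 - η/2)) with ⟨he, _⟩ | ⟨he, _⟩
      · rw [he] at h0; linarith
      · rw [he] at h0; linarith
    have hyb : y ≤ 1/2 + η/2 := by
      rcases abs_cases (y - (3/4 + η/2)) with ⟨he, _⟩ | ⟨he, _⟩
      · rw [he] at h1; linarith
      · rw [he] at h1; linarith
    have hsum : ∑ i, |y - (![1/4 - η/2, 3/4 + η/2] : Fin 2 → ℝ) i| = 1/2 + η := by
      simp only [Fin.sum_univ_succ, Fin.sum_univ_zero, Matrix.cons_val_zero,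
        Matrix.cons_val_one, Matrix.head_cons, Fin.succ_zero_eq_one, add_zero]
      rw [abs_of_nonneg (by linarith), abs_of_nonpos (by linarith)]
      ring
    have hBdd : BddAbove ((fun z => ∑ i, |z - (![1/4 - η/2, 3/4 + η/2] : Fin 2 → ℝ) i|) ''
        Set.Icc (0:ℝ) 1) := by
      refine ⟨2, ?_⟩
      rintro w ⟨z, ⟨hz0, hz1⟩, rfl⟩
      simp only [Fin.sum_univ_succ, Fin.sum_univ_zero, Matrix.cons_val_zero,
        Matrix.cons_val_one, Matrix.head_cons, Fin.succ_zero_eq_one, add_zero]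
      have e0 : |z - (1/4 - η/2)| ≤ 1 := by
        rw [abs_le]; constructor <;> linarith
      have e1 : |z - (3/4 + η/2)| ≤ 1 := by
        rw [abs_le]; constructor <;> linarith
      linarith
    have hmem : (1:ℝ) ∈ ((fun z => ∑ i, |z - (![1/4 - η/2, 3/4 + η/2] : Fin 2 → ℝ) i|) ''
        Set.Icc (0:ℝ) 1) := by
      refine ⟨0, ⟨le_refl _, by norm_num⟩, ?_⟩
      simp only [Fin.sum_univ_succ, Fin.sum_univ_zero, Matrix.cons_val_zero,
        Matrix.cons_val_one, Matrix.head_cons, Fin.succ_zero_eq_one, add_zero]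
      rw [abs_of_nonpos (by linarith), abs_of_nonpos (by linarith)]
      ring
    have hsSup : (1:ℝ) ≤ sSup ((fun z => ∑ i, |z - (![1/4 - η/2, 3/4 + η/2] : Fin 2 → ℝ) i|) ''
        Set.Icc (0:ℝ) 1) := le_csSup hBdd hmem
    rw [hsum]
    nlinarith [mul_nonneg hε.le hη0.le]
end

section
/- For every n ≥ 1 and every profile x ∈ [0,1]^n there exists a facility location y ∈ [0,1] satisfying 2-IFS such that sup_{z ∈ [0,1]} ∑_i |z − x_i| ≤ 2 · ∑_i |y − x_i|. Hence the price of 2-IFS for utilitarian welfare is at most 2 (and, with the matching lower bound, equals 2). -/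
/-!
The welfare `z ↦ ∑ i, |z - x i|` is convex, so its supremum over `[0,1]` is
`max (∑ x i) (n - ∑ x i)`; after the reflection `x ↦ 1 - x` we may assume `n ≤ 2 ∑ x i`.
The forbidden interval of radius `1/(2n)` around an agent contains at most one of the `n + 1` grid
points `j/n`, so some grid point is free; let `m/n` be the least one. Each blocked grid point `j/n`
with `j < m` has its own blocking agent, at distance more than `(m - j - 1/2)/n` to the left of
`m/n`, so the welfare at `m/n` is at least `∑ x i - m + m²/n`. Since `(n - 2m)² ≥ 0`, this is at
least `∑ x i / 2`.
-/

open Finset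

theorem sum_range_sub_sub_half (m : ℕ) :
    ∑ j ∈ range m, ((m : ℝ) - j - 1 / 2) = m ^ 2 / 2 := by
  induction m with
  | zero => simp
  | succ m ih =>
    rw [sum_range_succ']
    push_cast
    simp only [add_sub_add_right_eq_sub, ih]
    ring

theorem eq_of_abs_nat_mul_sub_lt_half {h a : ℝ} (hh : 0 < h) {j k : ℕ}
    (hj : |j * h - a| < h / 2) (hk : |k * h - a| < h / 2) : j = k := by
  obtain ⟨hj₁, hj₂⟩ := abs_lt.mp hj
  obtain ⟨hk₁, hk₂⟩ := abs_lt.mp hk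
  have hjk : (j : ℝ) < k + 1 := lt_of_mul_lt_mul_right (by linarith) hh.le
  have hkj : (k : ℝ) < j + 1 := lt_of_mul_lt_mul_right (by linarith) hh.le
  have : j < k + 1 := by exact_mod_cast hjk
  have : k < j + 1 := by exact_mod_cast hkj
  omega

section Grid

variable {ι : Type*} {h : ℝ} (a : ι → ℝ)

theorem exists_le_card_forall_half_le_abs_nat_mul_sub [Fintype ι] (hh : 0 < h) :
    ∃ j ≤ Fintype.card ι, ∀ i, h / 2 ≤ |j * h - a i| := by
  by_contra! hcon
  choose g hg using fun j : Fin (Fintype.card ι + 1) => hcon j (Nat.lt_succ_iff.mp j.2)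
  obtain ⟨j, k, hjk, hg_eq⟩ := Fintype.exists_ne_map_eq_of_card_lt g (by simp)
  exact hjk (Fin.ext (eq_of_abs_nat_mul_sub_lt_half hh (hg j) (hg_eq ▸ hg k)))

theorem exists_finset_sq_mul_half_le_sum_sub (hh : 0 < h) {m : ℕ}
    (hblocked : ∀ j < m, ∃ i, |j * h - a i| < h / 2) :
    ∃ T : Finset ι, m ^ 2 * h / 2 ≤ ∑ i ∈ T, (m * h - a i) := by
  choose g hg using fun j : Fin m => hblocked j j.2
  have hg_inj : Function.Injective g := fun j k hjk =>
    Fin.ext (eq_of_abs_nat_mul_sub_lt_half hh (hg j) (hjk ▸ hg k))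
  refine ⟨univ.map ⟨g, hg_inj⟩, ?_⟩
  calc (m : ℝ) ^ 2 * h / 2 = ∑ j ∈ range m, ((m : ℝ) - j - 1 / 2) * h := by
        rw [← sum_mul, sum_range_sub_sub_half]; ring
    _ = ∑ j : Fin m, ((m : ℝ) - (j : ℕ) - 1 / 2) * h :=
        (Fin.sum_univ_eq_sum_range (fun j => ((m : ℝ) - j - 1 / 2) * h) m).symm
    _ ≤ ∑ j : Fin m, (m * h - a (g j)) := by
        gcongr with j
        linarith [(abs_lt.mp (hg j)).1]
    _ = ∑ i ∈ univ.map ⟨g, hg_inj⟩, (m * h - a i) := by rw [sum_map]; rfl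

end Grid

section IFS

variable {ι : Type*} [Fintype ι]

theorem sum_sub_card_mul_add_two_mul_sum_le_sum_abs (x : ι → ℝ) (y : ℝ) (T : Finset ι) :
    ∑ i, x i - Fintype.card ι * y + 2 * ∑ i ∈ T, (y - x i) ≤ ∑ i, |y - x i| := by
  classical
  have hsplit : ∑ i, x i - Fintype.card ι * y = ∑ i ∈ T, (x i - y) + ∑ i ∈ Tᶜ, (x i - y) := by
    rw [sum_add_sum_compl, sum_sub_distrib, sum_const, card_univ, nsmul_eq_mul]
  calc ∑ i, x i - Fintype.card ι * y + 2 * ∑ i ∈ T, (y - x i)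
      = ∑ i ∈ T, (y - x i) + ∑ i ∈ Tᶜ, (x i - y) := by
        rw [hsplit]; simp only [sum_sub_distrib]; ring
    _ ≤ ∑ i ∈ T, |y - x i| + ∑ i ∈ Tᶜ, |y - x i| := by
        gcongr with i _ i _
        · exact le_abs_self _
        · exact abs_sub_comm y (x i) ▸ le_abs_self _
    _ = ∑ i, |y - x i| := sum_add_sum_compl T _

theorem exists_IFS_of_card_le_two_mul_sum [Nonempty ι] (x : ι → ℝ)
    (hS : (Fintype.card ι : ℝ) ≤ 2 * ∑ i, x i) :
    ∃ y ∈ Set.Icc (0 : ℝ) 1, (∀ i, 1 / (2 * Fintype.card ι) ≤ |y - x i|) ∧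
      ∑ i, x i ≤ 2 * ∑ i, |y - x i| := by
  classical
  have hn : (0 : ℝ) < Fintype.card ι := by exact_mod_cast Fintype.card_pos
  set h := (Fintype.card ι : ℝ)⁻¹ with h_def
  have hh : 0 < h := inv_pos.2 hn
  have hnh : Fintype.card ι * h = 1 := mul_inv_cancel₀ hn.ne'
  have hfree := exists_le_card_forall_half_le_abs_nat_mul_sub x hh
  set m := Nat.find hfree
  obtain ⟨hm_le, hm_free⟩ := Nat.find_spec hfree
  have hblocked : ∀ j < m, ∃ i, |j * h - x i| < h / 2 := fun j hj => by
    by_contra! hfree_j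
    exact Nat.find_min hfree hj ⟨hj.le.trans hm_le, hfree_j⟩
  obtain ⟨T, hT⟩ := exists_finset_sq_mul_half_le_sum_sub x hh hblocked
  have hW := sum_sub_card_mul_add_two_mul_sum_le_sum_abs x (m * h) T
  refine ⟨m * h, ⟨by positivity, ?_⟩, fun i => ?_, ?_⟩
  · rw [← hnh]
    gcongr
  · calc 1 / (2 * Fintype.card ι) = h / 2 := by rw [h_def]; ring
      _ ≤ |m * h - x i| := hm_free i
  · nlinarith [mul_nonneg (sq_nonneg ((Fintype.card ι : ℝ) - 2 * m)) hh.le]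

theorem exists_IFS_max_le [Nonempty ι] (x : ι → ℝ) :
    ∃ y ∈ Set.Icc (0 : ℝ) 1, (∀ i, 1 / (2 * Fintype.card ι) ≤ |y - x i|) ∧
      max (∑ i, x i) (Fintype.card ι - ∑ i, x i) ≤ 2 * ∑ i, |y - x i| := by
  rcases le_total (Fintype.card ι : ℝ) (2 * ∑ i, x i) with hS | hS
  · obtain ⟨y, hy, hfeas, hW⟩ := exists_IFS_of_card_le_two_mul_sum x hS
    exact ⟨y, hy, hfeas, max_le hW (by linarith)⟩
  · have hsum : ∑ i, (1 - x i) = Fintype.card ι - ∑ i, x i := by simp [sum_sub_distrib]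
    have hreflect : ∀ y i, |1 - y - x i| = |y - (1 - x i)| := fun y i => by
      rw [← abs_neg]; ring_nf
    obtain ⟨y, ⟨hy₀, hy₁⟩, hfeas, hW⟩ :=
      exists_IFS_of_card_le_two_mul_sum (fun i => 1 - x i) (by linarith)
    refine ⟨1 - y, ⟨by linarith, by linarith⟩, fun i => hreflect y i ▸ hfeas i, ?_⟩
    simp only [hreflect, hsum] at hW ⊢
    exact max_le (by linarith) hW

theorem sum_abs_sub_le_max {x : ι → ℝ} (hx : ∀ i, x i ∈ Set.Icc (0 : ℝ) 1) {z : ℝ}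
    (hz : z ∈ Set.Icc (0 : ℝ) 1) :
    ∑ i, |z - x i| ≤ max (∑ i, x i) (Fintype.card ι - ∑ i, x i) := by
  obtain ⟨hz₀, hz₁⟩ := hz
  calc ∑ i, |z - x i| ≤ ∑ i, ((1 - z) * x i + z * (1 - x i)) := by
        gcongr with i
        obtain ⟨hx₀, hx₁⟩ := hx i
        rw [abs_sub_le_iff]
        constructor <;> nlinarith
    _ = (1 - z) * ∑ i, x i + z * (Fintype.card ι - ∑ i, x i) := by
        simp [sum_add_distrib, ← mul_sum, sum_sub_distrib]
    _ ≤ max (∑ i, x i) (Fintype.card ι - ∑ i, x i) := by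
        nlinarith [le_max_left (∑ i, x i) (Fintype.card ι - ∑ i, x i),
          le_max_right (∑ i, x i) (Fintype.card ι - ∑ i, x i)]

end IFS

/-- The price of 2-IFS for utilitarian welfare is at most 2. -/
theorem price_of_two_IFS_UW_upper :
    ∀ (n : ℕ) (x : Fin n → ℝ), 1 ≤ n → (∀ i, x i ∈ Set.Icc (0:ℝ) 1) →
      ∃ y ∈ Set.Icc (0:ℝ) 1, (∀ i, 1 / (2 * n) ≤ |y - x i|) ∧
        sSup ((fun z => ∑ i, |z - x i|) '' Set.Icc (0:ℝ) 1) ≤ 2 * ∑ i, |y - x i| := by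
  intro n x hn hx
  have : Nonempty (Fin n) := ⟨⟨0, hn⟩⟩
  obtain ⟨y, hy, hfeas, hW⟩ := exists_IFS_max_le x
  rw [Fintype.card_fin] at hfeas
  refine ⟨y, hy, hfeas, csSup_le ((Set.nonempty_Icc.2 zero_le_one).image _) ?_⟩
  rintro _ ⟨z, hz, rfl⟩
  exact (sum_abs_sub_le_max hx hz).trans hW
end

section
/- For every n ≥ 1 and every profile x ∈ [0,1]^n there exists a facility location y ∈ [0,1] satisfying 2-UFS such that sup_{z ∈ [0,1]} ∑_i |z − x_i| ≤ 2 · ∑_i |y − x_i|. Hence the price of 2-UFS for utilitarian welfare is at most 2 (and, since 2-UFS implies 2-IFS, together with the 2-IFS lower bound it equals 2). -/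
set_option maxHeartbeats 1000000

open Finset

open Classical in
private lemma greedy (n : ℕ) (hn : 1 ≤ n) (x : Fin n → ℝ) :
    ∃ y : ℝ, 0 ≤ y ∧ y ≤ 1 ∧
      (∀ p : ℝ, ((Finset.univ.filter (fun i => x i = p)).card : ℝ) / (2 * n) ≤ |y - p|) ∧
      (n : ℝ) * y ^ 2 ≤ 2 * ∑ i, max (y - x i) 0 := by
  have hN : (0:ℝ) < n := by exact_mod_cast Nat.lt_of_lt_of_le Nat.zero_lt_one hn
  set P : Finset ℝ := Finset.univ.image x with hP
  set c : ℝ → ℕ := fun p => (Finset.univ.filter (fun i => x i = p)).card with hc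
  have hcP : ∀ p, p ∉ P → c p = 0 := by
    intro p hp
    simp only [hc, Finset.card_eq_zero, Finset.filter_eq_empty_iff]
    intro i _
    intro h
    exact hp (by rw [hP]; exact Finset.mem_image.2 ⟨i, Finset.mem_univ i, h⟩)
  have hsum : ∑ p ∈ P, (c p : ℝ) = n := by
    have := Finset.card_eq_sum_card_fiberwise (f := x) (s := Finset.univ) (t := P)
      (fun i _ => by rw [hP]; exact Finset.mem_image.2 ⟨i, Finset.mem_univ i, rfl⟩)
    have h2 : (Finset.univ : Finset (Fin n)).card = n := by simp
    rw [h2] at this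
    exact_mod_cast congrArg (Nat.cast : ℕ → ℝ) this.symm
  have hmax : ∀ y : ℝ, ∑ p ∈ P, (c p : ℝ) * max (y - p) 0 = ∑ i, max (y - x i) 0 := by
    intro y
    have := Finset.sum_comp (s := (Finset.univ : Finset (Fin n)))
      (f := fun p : ℝ => max (y - p) 0) (g := x)
    rw [this]
    simp [nsmul_eq_mul, hc, hP]
  -- the terminal step
  have term : ∀ (Q : Finset ℝ), Q ⊆ P → ∀ y : ℝ, 0 ≤ y →
      (∀ p ∈ P, p ∉ Q → p + (c p : ℝ) / (2 * n) ≤ y) →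
      ((n:ℝ) * y ≤ ∑ p ∈ P \ Q, (c p : ℝ)) →
      ((n:ℝ) * y ^ 2 ≤ 2 * ∑ p ∈ P \ Q, (c p : ℝ) * (y - p)) →
      (∀ p ∈ Q, (c p : ℝ) / (2*n) ≤ |y - p|) →
      ∃ y' : ℝ, 0 ≤ y' ∧ y' ≤ 1 ∧ (∀ p : ℝ, (c p : ℝ) / (2*n) ≤ |y' - p|) ∧
        (n:ℝ) * y' ^ 2 ≤ 2 * ∑ i, max (y' - x i) 0 := by
    intro Q hQP y hy0 hout hK hD hval
    have hsub : ∑ p ∈ P \ Q, (c p : ℝ) ≤ ∑ p ∈ P, (c p : ℝ) :=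
      Finset.sum_le_sum_of_subset_of_nonneg Finset.sdiff_subset
        (fun p _ _ => by positivity)
    have hy1 : y ≤ 1 := by
      rw [hsum] at hsub
      nlinarith
    refine ⟨y, hy0, hy1, ?_, ?_⟩
    · intro p
      by_cases hpP : p ∈ P
      · by_cases hpQ : p ∈ Q
        · exact hval p hpQ
        · have h := hout p hpP hpQ
          have h2 : (c p : ℝ) / (2*n) ≤ y - p := by linarith
          exact h2.trans (le_abs_self _)
      · rw [hcP p hpP]
        simp [abs_nonneg]
    · calc (n:ℝ) * y ^ 2 ≤ 2 * ∑ p ∈ P \ Q, (c p : ℝ) * (y - p) := hD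
        _ ≤ 2 * ∑ p ∈ P, (c p : ℝ) * max (y - p) 0 := by
            gcongr 2 * ?_
            calc ∑ p ∈ P \ Q, (c p : ℝ) * (y - p)
                ≤ ∑ p ∈ P \ Q, (c p : ℝ) * max (y - p) 0 :=
                  Finset.sum_le_sum (fun p _ =>
                    mul_le_mul_of_nonneg_left (le_max_left _ _) (Nat.cast_nonneg _))
              _ ≤ ∑ p ∈ P, (c p : ℝ) * max (y - p) 0 :=
                  Finset.sum_le_sum_of_subset_of_nonneg Finset.sdiff_subset
                    (fun p _ _ => by positivity)
        _ = 2 * ∑ i, max (y - x i) 0 := by rw [hmax]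
  have H : ∀ (k : ℕ) (Q : Finset ℝ), Q.card ≤ k → Q ⊆ P → ∀ y : ℝ, 0 ≤ y →
      (∀ p ∈ P, p ∉ Q → p + (c p : ℝ) / (2 * n) ≤ y) →
      ((n:ℝ) * y ≤ ∑ p ∈ P \ Q, (c p : ℝ)) →
      ((n:ℝ) * y ^ 2 ≤ 2 * ∑ p ∈ P \ Q, (c p : ℝ) * (y - p)) →
      ∃ y' : ℝ, 0 ≤ y' ∧ y' ≤ 1 ∧ (∀ p : ℝ, (c p : ℝ) / (2*n) ≤ |y' - p|) ∧
        (n:ℝ) * y' ^ 2 ≤ 2 * ∑ i, max (y' - x i) 0 := by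
    intro k
    induction k with
    | zero =>
      intro Q hcard hQP y hy0 hout hK hD
      have hQ : Q = ∅ := Finset.card_eq_zero.1 (Nat.le_zero.1 hcard)
      exact term Q hQP y hy0 hout hK hD (by simp [hQ])
    | succ k ih =>
      intro Q hcard hQP y hy0 hout hK hD
      by_cases hval : ∀ p ∈ Q, (c p : ℝ) / (2*n) ≤ |y - p|
      · exact term Q hQP y hy0 hout hK hD hval
      · push_neg at hval
        obtain ⟨p0, hp0Q, hlt⟩ := hval
        have hp0P : p0 ∈ P := hQP hp0Q
        set r : ℝ := (c p0 : ℝ) / (2 * n) with hr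
        have hrpos : 0 ≤ r := by positivity
        have habs := abs_lt.1 hlt
        set y' : ℝ := p0 + r with hy'
        have hyy' : y < y' := by rw [hy']; linarith [habs.2]
        have hstep : y' - y ≤ 2 * r := by rw [hy']; linarith [habs.1]
        have hp0notin : p0 ∉ P \ Q := by simp [Finset.mem_sdiff, hp0Q]
        have hsd : P \ Q.erase p0 = insert p0 (P \ Q) := Finset.sdiff_erase hp0P
        have hKsum : ∑ p ∈ P \ Q.erase p0, (c p:ℝ) = (c p0:ℝ) + ∑ p ∈ P \ Q, (c p:ℝ) := by
          rw [hsd, Finset.sum_insert hp0notin]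
        have hDsum : ∑ p ∈ P \ Q.erase p0, (c p:ℝ) * (y' - p)
            = (c p0:ℝ) * r + ∑ p ∈ P \ Q, (c p:ℝ) * (y' - p) := by
          rw [hsd, Finset.sum_insert hp0notin, hy']; ring_nf
        have hshift : ∑ p ∈ P \ Q, (c p:ℝ) * (y' - p)
            = (∑ p ∈ P \ Q, (c p:ℝ) * (y - p)) + (y' - y) * ∑ p ∈ P \ Q, (c p:ℝ) := by
          rw [Finset.mul_sum, ← Finset.sum_add_distrib]
          exact Finset.sum_congr rfl (fun p _ => by ring)
        have hcr : (c p0 : ℝ) = 2 * n * r := by rw [hr]; field_simp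
        apply ih (Q.erase p0) ?_ ((Finset.erase_subset _ _).trans hQP) y'
          (le_of_lt (lt_of_le_of_lt hy0 hyy')) ?_ ?_ ?_
        · have := Finset.card_erase_of_mem hp0Q
          omega
        · intro p hpP hpQ'
          by_cases hpp : p = p0
          · subst hpp; rw [hy']
          · have hpQ : p ∉ Q := fun h => hpQ' (Finset.mem_erase.2 ⟨hpp, h⟩)
            exact (hout p hpP hpQ).trans (le_of_lt hyy')
        · rw [hKsum]
          have : (n:ℝ) * y' = n * y + (y' - y) * n := by ring
          nlinarith [hK, habs.1, hN, hcr, hstep]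
        · rw [hDsum, hshift]
          obtain ⟨K0, hK0⟩ : ∃ K0, K0 = ∑ p ∈ P \ Q, (c p : ℝ) := ⟨_, rfl⟩
          obtain ⟨D0, hD0⟩ : ∃ D0, D0 = ∑ p ∈ P \ Q, (c p : ℝ) * (y - p) := ⟨_, rfl⟩
          rw [← hK0, ← hD0]
          rw [← hK0] at hK
          rw [← hD0] at hD
          have hy'y : 0 < y' - y := sub_pos.2 hyy'
          have e1 : (y' - y) * ((n:ℝ) * y) ≤ (y' - y) * K0 :=
            mul_le_mul_of_nonneg_left hK (le_of_lt hy'y)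
          have e2 : (n:ℝ) * (y' - y)^2 ≤ (n:ℝ) * (2*r)^2 := by
            apply mul_le_mul_of_nonneg_left _ (le_of_lt hN)
            nlinarith [hstep, hy'y]
          clear_value r y'
          clear hDsum hKsum hshift hsd hout hlt habs hstep
          nlinarith [hD, e1, e2, hcr]
  obtain ⟨y, h0, h1, hval, hD⟩ := H P.card P le_rfl subset_rfl 0 le_rfl
    (fun p hp hnp => absurd hp hnp) (by simp) (by simp)
  exact ⟨y, h0, h1, hval, hD⟩

open Classical in
private lemma aux (n : ℕ) (hn : 1 ≤ n) (x : Fin n → ℝ) (hx : ∀ i, x i ∈ Set.Icc (0:ℝ) 1)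
    (hS : (n:ℝ) ≤ 2 * ∑ i, x i) :
    ∃ y ∈ Set.Icc (0:ℝ) 1,
      (∀ p : ℝ, ((Finset.univ.filter (fun i => x i = p)).card : ℝ) / (2 * n) ≤ |y - p|) ∧
      ∑ i, x i ≤ 2 * ∑ i, |y - x i| := by
  have hN : (0:ℝ) < n := by exact_mod_cast Nat.lt_of_lt_of_le Nat.zero_lt_one hn
  obtain ⟨y, hy0, hy1, hval, hD⟩ := greedy n hn x
  refine ⟨y, ⟨hy0, hy1⟩, hval, ?_⟩
  have key : ∀ i, |y - x i| = x i - y + 2 * max (y - x i) 0 := by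
    intro i
    rcases le_total y (x i) with h | h
    · rw [abs_of_nonpos (by linarith), max_eq_right (by linarith)]; ring
    · rw [abs_of_nonneg (by linarith), max_eq_left (by linarith)]; ring
  have hWs : ∑ i, |y - x i| = (∑ i, x i) - n * y + 2 * ∑ i, max (y - x i) 0 := by
    calc ∑ i, |y - x i| = ∑ i, (x i - y + 2 * max (y - x i) 0) :=
          Finset.sum_congr rfl (fun i _ => key i)
      _ = (∑ i, x i) - n * y + 2 * ∑ i, max (y - x i) 0 := by
          rw [Finset.sum_add_distrib, Finset.sum_sub_distrib, Finset.sum_const,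
            Finset.card_univ, Fintype.card_fin, ← Finset.mul_sum, nsmul_eq_mul]
  rw [hWs]
  nlinarith [hD, hS, sq_nonneg (2*y - 1), hN]

open Classical in
private lemma welfareSupLe (n : ℕ) (x : Fin n → ℝ) (hx : ∀ i, x i ∈ Set.Icc (0:ℝ) 1) :
    sSup ((fun z => ∑ i, |z - x i|) '' Set.Icc (0:ℝ) 1)
      ≤ max (∑ i, x i) (∑ i, (1 - x i)) := by
  have hA : (0:ℝ) ≤ ∑ i, x i := Finset.sum_nonneg (fun i _ => (hx i).1)
  apply Real.sSup_le _ (le_max_of_le_left hA)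
  rintro w ⟨z, hz, rfl⟩
  have hptw : ∀ i, |z - x i| ≤ (1 - z) * x i + z * (1 - x i) := by
    intro i
    obtain ⟨h0, h1⟩ := hx i
    obtain ⟨hz0, hz1⟩ := hz
    rcases le_total z (x i) with h | h
    · rw [abs_of_nonpos (by linarith)]; nlinarith
    · rw [abs_of_nonneg (by linarith)]; nlinarith
  calc ∑ i, |z - x i| ≤ ∑ i, ((1 - z) * x i + z * (1 - x i)) := Finset.sum_le_sum (fun i _ => hptw i)
    _ = (1 - z) * ∑ i, x i + z * ∑ i, (1 - x i) := by
        rw [Finset.sum_add_distrib, Finset.mul_sum, Finset.mul_sum]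
    _ ≤ max (∑ i, x i) (∑ i, (1 - x i)) := by
        obtain ⟨hz0, hz1⟩ := hz
        have h1 : ∑ i, x i ≤ max (∑ i, x i) (∑ i, (1 - x i)) := le_max_left _ _
        have h2 : ∑ i, (1 - x i) ≤ max (∑ i, x i) (∑ i, (1 - x i)) := le_max_right _ _
        nlinarith

open Classical in
/-- The price of 2-UFS for utilitarian welfare is at most 2. -/
theorem price_of_two_UFS_UW_upper :
    ∀ (n : ℕ) (x : Fin n → ℝ), 1 ≤ n → (∀ i, x i ∈ Set.Icc (0:ℝ) 1) →
      ∃ y ∈ Set.Icc (0:ℝ) 1,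
        (∀ p ∈ Set.Icc (0:ℝ) 1,
          ((Finset.univ.filter (fun i => x i = p)).card : ℝ) / (2 * n) ≤ |y - p|) ∧
        sSup ((fun z => ∑ i, |z - x i|) '' Set.Icc (0:ℝ) 1) ≤ 2 * ∑ i, |y - x i| := by
  intro n x hn hx
  have hN : (0:ℝ) < n := by exact_mod_cast Nat.lt_of_lt_of_le Nat.zero_lt_one hn
  have hsub : ∑ i, (1 - x i) = (n:ℝ) - ∑ i, x i := by
    rw [Finset.sum_sub_distrib, Finset.sum_const, Finset.card_univ, Fintype.card_fin,
      nsmul_eq_mul, mul_one]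
  by_cases hS : (n:ℝ) ≤ 2 * ∑ i, x i
  · obtain ⟨y, hy, hval, hW⟩ := aux n hn x hx hS
    refine ⟨y, hy, fun p _ => hval p, ?_⟩
    calc sSup ((fun z => ∑ i, |z - x i|) '' Set.Icc (0:ℝ) 1)
        ≤ max (∑ i, x i) (∑ i, (1 - x i)) := welfareSupLe n x hx
      _ ≤ 2 * ∑ i, |y - x i| := by
          rw [hsub]
          apply max_le hW (by linarith)
  · push_neg at hS
    set x' : Fin n → ℝ := fun i => 1 - x i with hx'def
    have hx' : ∀ i, x' i ∈ Set.Icc (0:ℝ) 1 := by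
      intro i
      obtain ⟨h0, h1⟩ := hx i
      exact ⟨by simp [hx'def]; linarith, by simp [hx'def]; linarith⟩
    have hsub' : ∑ i, x' i = (n:ℝ) - ∑ i, x i := hsub
    have hS' : (n:ℝ) ≤ 2 * ∑ i, x' i := by rw [hsub']; linarith
    obtain ⟨y', hy', hval', hW'⟩ := aux n hn x' hx' hS'
    refine ⟨1 - y', ⟨by linarith [hy'.2], by linarith [hy'.1]⟩, ?_, ?_⟩
    · intro p _
      have hfilt : (Finset.univ.filter (fun i => x i = p))
          = (Finset.univ.filter (fun i => x' i = 1 - p)) := by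
        apply Finset.filter_congr
        intro i _
        simp only [hx'def, eq_iff_iff]
        constructor
        · intro h; rw [h]
        · intro h; linarith
      have habs : |1 - y' - p| = |y' - (1 - p)| := by
        rw [abs_sub_comm]; ring_nf
      rw [hfilt, habs]
      exact hval' (1 - p)
    · have hWeq : ∑ i, |1 - y' - x i| = ∑ i, |y' - x' i| := by
        apply Finset.sum_congr rfl
        intro i _
        rw [abs_sub_comm (y') (x' i)]
        simp only [hx'def]
        ring_nf
      calc sSup ((fun z => ∑ i, |z - x i|) '' Set.Icc (0:ℝ) 1)
          ≤ max (∑ i, x i) (∑ i, (1 - x i)) := welfareSupLe n x hx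
        _ ≤ 2 * ∑ i, |1 - y' - x i| := by
            rw [hWeq, hsub]
            apply max_le (by linarith [hW', hsub']) (by rw [← hsub']; exact hW')
end

section
/- For every n ≥ 1, every profile x ∈ [0,1]^n, and every facility location y* ∈ [0,1] that maximizes the egalitarian welfare (i.e., min_i |y* − x_i| ≥ min_i |z − x_i| for all z ∈ [0,1]), y* satisfies 2-IFS: |y* − x_i| ≥ 1/(2n) for every agent i. Consequently, the price of 2-IFS for egalitarian welfare is 1. -/
/-!
Rounding `n * x j` to the nearest integer sends the `n` agents into the `n + 1` grid points
`k / n ∈ [0, 1]`, and an agent closer than `1 / (2n)` to a grid point is sent to it. Hence some grid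
point is at distance at least `1 / (2n)` from every agent, so the optimal egalitarian welfare is at
least `1 / (2n)`.
-/

theorem round_eq_of_abs_sub_lt_half {r : ℝ} {k : ℤ} (h : |r - k| < 1 / 2) : round r = k := by
  rw [round_eq_iff]
  constructor <;> linarith [abs_sub_lt_iff.mp h]

theorem exists_mem_Icc_forall_le_abs_sub {ι : Type*} [Fintype ι] {n : ℕ} (hn : 0 < n)
    (hcard : Fintype.card ι ≤ n) (x : ι → ℝ) :
    ∃ z ∈ Set.Icc (0 : ℝ) 1, ∀ j, 1 / (2 * n) ≤ |z - x j| := by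
  have hn' : (0 : ℝ) < n := by exact_mod_cast hn
  have hlt : (Finset.univ.image fun j => round (n * x j)).card < (Finset.Icc (0 : ℤ) n).card := by
    calc (Finset.univ.image fun j => round (n * x j)).card
        ≤ Fintype.card ι := Finset.card_image_le
      _ < (Finset.Icc (0 : ℤ) n).card := by rw [Int.card_Icc]; omega
  obtain ⟨k, hk, hk_miss⟩ := Finset.exists_mem_notMem_of_card_lt_card hlt
  obtain ⟨hk0, hkn⟩ := Finset.mem_Icc.mp hk
  refine ⟨k / n, ⟨by positivity, div_le_one_of_le₀ (by exact_mod_cast hkn) hn'.le⟩, fun j => ?_⟩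
  by_contra! hclose
  have hround : |n * x j - k| < 1 / 2 := by
    calc |n * x j - k| = n * |k / n - x j| := by
          rw [abs_sub_comm, ← abs_of_pos hn', ← abs_mul, abs_of_pos hn', mul_sub,
            mul_div_cancel₀ _ hn'.ne']
      _ < n * (1 / (2 * n)) := mul_lt_mul_of_pos_left hclose hn'
      _ = 1 / 2 := by field_simp
  exact hk_miss (Finset.mem_image.mpr ⟨j, Finset.mem_univ j, round_eq_of_abs_sub_lt_half hround⟩)

/-- Any facility location maximizing egalitarian welfare satisfies 2-IFS;
hence the price of 2-IFS for egalitarian welfare is 1. -/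
theorem egal_optimal_satisfies_two_IFS :
    ∀ (n : ℕ) (x : Fin n → ℝ), 1 ≤ n → (∀ i, x i ∈ Set.Icc (0:ℝ) 1) →
      ∀ y ∈ Set.Icc (0:ℝ) 1,
        (∀ z ∈ Set.Icc (0:ℝ) 1, (⨅ i, |z - x i|) ≤ ⨅ i, |y - x i|) →
        ∀ i, 1 / (2 * n) ≤ |y - x i| := by
  intro n x hn _ y _ hopt i
  have : Nonempty (Fin n) := ⟨⟨0, hn⟩⟩
  obtain ⟨z, hz, hfar⟩ := exists_mem_Icc_forall_le_abs_sub hn (Fintype.card_fin n).le x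
  calc 1 / (2 * n) ≤ ⨅ j, |z - x j| := le_ciInf hfar
    _ ≤ ⨅ j, |y - x j| := hopt z hz
    _ ≤ |y - x i| := ciInf_le (Set.finite_range _).bddBelow i
end

section
/- For every n ≥ 2 and every profile x ∈ [0,1]^n there exists a facility location y ∈ [0,1] satisfying 2-UFS such that sup_{z ∈ [0,1]} min_i |z − x_i| ≤ (n − 1) · min_i |y − x_i|. That is, the price of 2-UFS for egalitarian welfare is at most n − 1. -/
open Classical MeasureTheory in
/-- There is a point of `[0,1]` outside all the "forbidden" balls around agent locations. -/
lemma exists_uncovered (n : ℕ) (x : Fin n → ℝ) (hn : 1 ≤ n)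
    (hx : ∀ i, x i ∈ Set.Icc (0:ℝ) 1) :
    ∃ y ∈ Set.Icc (0:ℝ) 1, ∀ i,
      ((Finset.univ.filter (fun j => x j = x i)).card : ℝ) / (2 * n) ≤ |y - x i| := by
  classical
  have hn0 : (0:ℝ) < n := by exact_mod_cast hn
  by_contra h
  push_neg at h
  set r : ℝ → ℝ := fun p => ((Finset.univ.filter (fun j => x j = p)).card : ℝ) / (2 * n) with hr
  set P : Finset ℝ := Finset.image x Finset.univ with hP
  set U : Set ℝ := ⋃ p ∈ P, Metric.ball p (r p) with hU
  have hcov : Set.Icc (0:ℝ) 1 ⊆ U := by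
    intro y hy
    obtain ⟨i, hi⟩ := h y hy
    refine Set.mem_biUnion (Finset.mem_image_of_mem x (Finset.mem_univ i)) ?_
    rw [Metric.mem_ball, Real.dist_eq]
    exact hi
  -- 0 is covered by some ball
  have h0 : (0:ℝ) ∈ U := hcov ⟨le_rfl, zero_le_one⟩
  rw [Set.mem_iUnion₂] at h0
  obtain ⟨p₀, hp₀P, hp₀b⟩ := h0
  have hp₀0 : 0 ≤ p₀ := by
    rw [hP, Finset.mem_image] at hp₀P
    obtain ⟨i, -, rfl⟩ := hp₀P
    exact (hx i).1
  have hp₀r : p₀ < r p₀ := by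
    rw [Metric.mem_ball, Real.dist_eq] at hp₀b
    rwa [abs_of_nonpos (by linarith), neg_sub, sub_zero] at hp₀b
  -- the measure bound
  have hsum : ∑ p ∈ P, ((Finset.univ.filter (fun j => x j = p)).card : ℝ) = n := by
    have := Finset.card_eq_sum_card_image x (Finset.univ : Finset (Fin n))
    rw [Finset.card_univ, Fintype.card_fin] at this
    exact_mod_cast this.symm
  have hUvol : volume U ≤ ENNReal.ofReal 1 := by
    calc volume U ≤ ∑ p ∈ P, volume (Metric.ball p (r p)) :=
          measure_biUnion_finset_le P _
      _ = ∑ p ∈ P, ENNReal.ofReal (2 * r p) := by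
          simp [Real.volume_ball]
      _ = ENNReal.ofReal (∑ p ∈ P, 2 * r p) := by
          rw [ENNReal.ofReal_sum_of_nonneg]
          intro p _
          have : (0:ℝ) ≤ r p := by positivity
          linarith
      _ = ENNReal.ofReal 1 := by
          congr 1
          have : ∑ p ∈ P, 2 * r p
              = (∑ p ∈ P, ((Finset.univ.filter (fun j => x j = p)).card : ℝ)) / n := by
            rw [Finset.sum_div]
            refine Finset.sum_congr rfl fun p _ => ?_
            rw [hr]
            field_simp
          rw [this, hsum]
          field_simp
  -- extra uncovered-by-[0,1] mass below 0
  have hsub : Set.Ioo (p₀ - r p₀) 0 ⊆ U := by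
    intro z hz
    refine Set.mem_biUnion hp₀P ?_
    rw [Metric.mem_ball, Real.dist_eq]
    rw [abs_of_nonpos (by linarith [hz.2])]
    linarith [hz.1]
  have hdisj : Disjoint (Set.Icc (0:ℝ) 1) (Set.Ioo (p₀ - r p₀) 0) := by
    rw [Set.disjoint_left]
    rintro z ⟨hz0, -⟩ ⟨-, hz1⟩
    linarith
  have hmeas : volume (Set.Icc (0:ℝ) 1 ∪ Set.Ioo (p₀ - r p₀) 0)
      = ENNReal.ofReal 1 + ENNReal.ofReal (r p₀ - p₀) := by
    rw [measure_union hdisj measurableSet_Ioo, Real.volume_Icc, Real.volume_Ioo]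
    norm_num
  have hle : volume (Set.Icc (0:ℝ) 1 ∪ Set.Ioo (p₀ - r p₀) 0) ≤ volume U :=
    measure_mono (Set.union_subset hcov hsub)
  rw [hmeas, ← ENNReal.ofReal_add zero_le_one (by linarith)] at hle
  have := (ENNReal.ofReal_le_ofReal_iff zero_le_one).mp (hle.trans hUvol)
  linarith

open Classical in
/-- The price of 2-UFS for egalitarian welfare is at most n - 1. -/
theorem price_of_two_UFS_EW_upper :
    ∀ (n : ℕ) (x : Fin n → ℝ), 2 ≤ n → (∀ i, x i ∈ Set.Icc (0:ℝ) 1) →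
      ∃ y ∈ Set.Icc (0:ℝ) 1,
        (∀ p ∈ Set.Icc (0:ℝ) 1,
          ((Finset.univ.filter (fun i => x i = p)).card : ℝ) / (2 * n) ≤ |y - p|) ∧
        sSup ((fun z => ⨅ i, |z - x i|) '' Set.Icc (0:ℝ) 1) ≤
          ((n : ℝ) - 1) * ⨅ i, |y - x i| := by
  intro n x hn hx
  classical
  haveI : Nonempty (Fin n) := Fin.pos_iff_nonempty.mp (by omega)
  have hn2 : (2:ℝ) ≤ n := by exact_mod_cast hn
  have hn0 : (0:ℝ) < n := by linarith
  set f : ℝ → ℝ := fun z => ⨅ i, |z - x i| with hf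
  have hbd : ∀ z : ℝ, BddBelow (Set.range fun i => |z - x i|) := by
    intro z
    refine ⟨0, ?_⟩
    rintro _ ⟨i, rfl⟩
    exact abs_nonneg _
  have hfnonneg : ∀ z, 0 ≤ f z := fun z => le_ciInf fun i => abs_nonneg _
  have hfle : ∀ z (i : Fin n), f z ≤ |z - x i| := fun z i => ciInf_le (hbd z) i
  -- f is 1-Lipschitz, hence continuous
  have hlip : LipschitzWith 1 f := by
    refine LipschitzWith.of_dist_le_mul fun z w => ?_
    rw [Real.dist_eq, Real.dist_eq, NNReal.coe_one, one_mul]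
    have key : ∀ a b : ℝ, f a - |a - b| ≤ f b := by
      intro a b
      refine le_ciInf fun i => ?_
      have h1 : f a ≤ |a - x i| := hfle a i
      have h2 : |a - x i| ≤ |b - x i| + |a - b| := by
        have := abs_sub_abs_le_abs_sub (a - x i) (b - x i)
        have h3 : |(a - x i) - (b - x i)| = |a - b| := by ring_nf
        calc |a - x i| = |(b - x i) + ((a - x i) - (b - x i))| := by ring_nf
          _ ≤ |b - x i| + |(a - x i) - (b - x i)| := abs_add_le _ _
          _ = |b - x i| + |a - b| := by rw [h3]
      linarith
    have k1 := key z w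
    have k2 := key w z
    rw [abs_sub_comm w z] at k2
    rw [abs_le]
    constructor <;> linarith
  set S : Set ℝ := f '' Set.Icc (0:ℝ) 1 with hS
  have hSne : S.Nonempty := ⟨f 0, 0, ⟨le_rfl, zero_le_one⟩, rfl⟩
  by_cases hd : sSup S ≤ ((n:ℝ) - 1) / (2 * n)
  · -- Case A: optimum is small; use an uncovered point
    obtain ⟨y, hy, hyc⟩ := exists_uncovered n x (by omega) hx
    refine ⟨y, hy, ?_, ?_⟩
    · intro p hp
      by_cases hcard : (Finset.univ.filter (fun i => x i = p)).card = 0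
      · rw [hcard]
        simp [abs_nonneg]
      · obtain ⟨i, hi⟩ := Finset.card_pos.mp (Nat.pos_of_ne_zero hcard)
        rw [Finset.mem_filter] at hi
        rw [← hi.2]
        exact hyc i
    · have h1 : (1:ℝ) / (2 * n) ≤ ⨅ i, |y - x i| := by
        refine le_ciInf fun i => ?_
        have hc : (1:ℝ) ≤ ((Finset.univ.filter (fun j => x j = x i)).card : ℝ) := by
          have : i ∈ Finset.univ.filter (fun j => x j = x i) := by
            simp
          exact_mod_cast Finset.card_pos.mpr ⟨i, this⟩
        calc (1:ℝ) / (2 * n) ≤ ((Finset.univ.filter (fun j => x j = x i)).card : ℝ) / (2 * n) := by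
              gcongr
          _ ≤ |y - x i| := hyc i
      calc sSup S ≤ ((n:ℝ) - 1) / (2 * n) := hd
        _ = ((n:ℝ) - 1) * (1 / (2 * n)) := by ring
        _ ≤ ((n:ℝ) - 1) * ⨅ i, |y - x i| := by
            apply mul_le_mul_of_nonneg_left h1 (by linarith)
  · -- Case B: optimum is large; the optimal point is 2-UFS
    push_neg at hd
    obtain ⟨y, hy, hymax⟩ := isCompact_Icc.exists_isMaxOn ⟨0, le_rfl, zero_le_one⟩
      hlip.continuous.continuousOn
    have hsup_le : sSup S ≤ f y := csSup_le hSne (by rintro _ ⟨z, hz, rfl⟩; exact hymax hz)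
    have hfy : ((n:ℝ) - 1) / (2 * n) < f y := lt_of_lt_of_le hd hsup_le
    refine ⟨y, hy, ?_, ?_⟩
    · intro p hp
      by_cases hcard : (Finset.univ.filter (fun i => x i = p)).card = 0
      · rw [hcard]; simp [abs_nonneg]
      · obtain ⟨i, hi⟩ := Finset.card_pos.mp (Nat.pos_of_ne_zero hcard)
        rw [Finset.mem_filter] at hi
        have hle : f y ≤ |y - p| := hi.2 ▸ hfle y i
        by_cases hcn : (Finset.univ.filter (fun i => x i = p)).card = n
        · -- all agents at p
          have hall : ∀ j, x j = p := by
            have := Finset.eq_univ_of_card _ (by rw [hcn, Fintype.card_fin])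
            intro j
            have hj : j ∈ Finset.univ.filter (fun i => x i = p) := by
              rw [this]; exact Finset.mem_univ j
            exact (Finset.mem_filter.mp hj).2
          have hhalf : (1:ℝ)/2 ≤ f y := by
            by_cases hph : p ≤ 1/2
            · have : f 1 ≤ f y := hymax ⟨zero_le_one, le_rfl⟩
              have h1 : f 1 = |1 - p| := by
                rw [hf]
                simp only [hall]
                exact ciInf_const
              rw [h1, abs_of_nonneg (by linarith [hp.2])] at this
              linarith
            · have : f 0 ≤ f y := hymax ⟨le_rfl, zero_le_one⟩
              have h1 : f 0 = |0 - p| := by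
                rw [hf]
                simp only [hall]
                exact ciInf_const
              rw [h1, abs_of_nonpos (by linarith [hp.1]), neg_sub, sub_zero] at this
              linarith
          rw [hcn]
          calc (n:ℝ) / (2 * n) = 1/2 := by field_simp
            _ ≤ f y := hhalf
            _ ≤ |y - p| := hle
        · have hcle : ((Finset.univ.filter (fun i => x i = p)).card : ℝ) ≤ (n:ℝ) - 1 := by
            have h1 : (Finset.univ.filter (fun i => x i = p)).card ≤ n := by
              calc (Finset.univ.filter (fun i => x i = p)).card
                  ≤ (Finset.univ : Finset (Fin n)).card := Finset.card_filter_le _ _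
                _ = n := by rw [Finset.card_univ, Fintype.card_fin]
            have : (Finset.univ.filter (fun i => x i = p)).card ≤ n - 1 := by omega
            have h2 : ((Finset.univ.filter (fun i => x i = p)).card : ℝ) ≤ ((n - 1 : ℕ) : ℝ) := by
              exact_mod_cast this
            have h3 : ((n - 1 : ℕ) : ℝ) = (n:ℝ) - 1 := by
              have : 1 ≤ n := by omega
              push_cast [this]
              ring
            linarith
          calc ((Finset.univ.filter (fun i => x i = p)).card : ℝ) / (2 * n)
              ≤ ((n:ℝ) - 1) / (2 * n) := by
                gcongr
            _ ≤ f y := le_of_lt hfy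
            _ ≤ |y - p| := hle
    · calc sSup S ≤ f y := hsup_le
        _ ≤ ((n:ℝ) - 1) * f y := le_mul_of_one_le_left (hfnonneg y) (by linarith)
end

section
/- For every n ≥ 3 and every ε > 0 there exists a profile x ∈ [0,1]^n (for instance one agent at 1/(2n) − δ and n − 1 agents at (n+1)/(2n) + δ for sufficiently small δ > 0) such that for every facility location y ∈ [0,1] satisfying 2-UFS, sup_{z ∈ [0,1]} min_i |z − x_i| ≥ (n − 1 − ε) · min_i |y − x_i|. That is, the price of 2-UFS for egalitarian welfare is at least n − 1. -/
set_option maxHeartbeats 1600000 in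
open Classical in
/-- The price of 2-UFS for egalitarian welfare is at least n - 1. -/
theorem price_of_two_UFS_EW_lower :
    ∀ (n : ℕ), 3 ≤ n → ∀ ε : ℝ, 0 < ε →
      ∃ x : Fin n → ℝ, (∀ i, x i ∈ Set.Icc (0:ℝ) 1) ∧
        ∀ y ∈ Set.Icc (0:ℝ) 1,
          (∀ p ∈ Set.Icc (0:ℝ) 1,
            ((Finset.univ.filter (fun i => x i = p)).card : ℝ) / (2 * n) ≤ |y - p|) →
          ((n : ℝ) - 1 - ε) * (⨅ i, |y - x i|) ≤
            sSup ((fun z => ⨅ i, |z - x i|) '' Set.Icc (0:ℝ) 1) := by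
  intro n hn ε hε
  haveI : NeZero n := ⟨by omega⟩
  set c : ℝ := (n : ℝ) with hc
  have hc3 : (3:ℝ) ≤ c := by rw [hc]; exact_mod_cast hn
  have hcpos : (0:ℝ) < c := by linarith
  set d : ℝ := (2*c)⁻¹ with hdd
  have hd : 2*c*d = 1 := by
    rw [hdd]; field_simp
  have hdpos : 0 < d := by rw [hdd]; positivity
  have hcd : 0 < c * d := mul_pos hcpos hdpos
  have h3d : 3 * d ≤ c * d := mul_le_mul_of_nonneg_right hc3 hdpos.le
  have hd6 : d ≤ 1/6 := by nlinarith
  set δ : ℝ := min ε 1 * d^2 with hδdef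
  have hδpos : 0 < δ := by
    have := lt_min hε one_pos
    positivity
  have hδε : δ ≤ ε * d^2 := by
    have := min_le_left ε 1
    nlinarith [sq_nonneg d]
  have hδd2 : δ ≤ d^2 := by
    have := min_le_right ε 1
    nlinarith [sq_nonneg d]
  have hδd : δ ≤ d/6 := by nlinarith
  set a : ℝ := d - δ with ha_def
  set b : ℝ := (c+1)*d + δ with hb_def
  have ha0 : 0 ≤ a := by rw [ha_def]; linarith
  have ha1 : a ≤ 1 := by rw [ha_def]; linarith
  have hb0 : 0 ≤ b := by rw [hb_def]; nlinarith [hcd]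
  have hb1 : b ≤ 1 := by rw [hb_def]; nlinarith [h3d, hd]
  have hab : a ≠ b := by
    have : a < b := by rw [ha_def, hb_def]; nlinarith [hcd]
    exact ne_of_lt this
  clear_value c d δ a b
  refine ⟨fun i => if i = 0 then a else b, ?_, ?_⟩
  · intro i
    by_cases h : i = 0 <;> simp [h] <;> constructor <;> assumption
  · intro y hy hufs
    obtain ⟨hy0, hy1⟩ := hy
    -- filter cards
    have hSa : Finset.univ.filter (fun i : Fin n => (if i = 0 then a else b) = a) = {0} := by
      ext i
      simp only [Finset.mem_filter, Finset.mem_univ, true_and, Finset.mem_singleton]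
      constructor
      · intro h
        by_contra hi
        rw [if_neg hi] at h
        exact hab h.symm
      · intro h; rw [if_pos h]
    have hSb : Finset.univ.filter (fun i : Fin n => (if i = 0 then a else b) = b) = {(0 : Fin n)}ᶜ := by
      ext i
      simp only [Finset.mem_filter, Finset.mem_univ, true_and, Finset.mem_compl,
        Finset.mem_singleton]
      constructor
      · intro h hi
        rw [if_pos hi] at h
        exact hab h
      · intro h; rw [if_neg h]
    have hcardb : (({(0 : Fin n)}ᶜ : Finset (Fin n)).card : ℝ) = c - 1 := by
      rw [Finset.card_compl, Finset.card_singleton, Fintype.card_fin]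
      rw [hc]
      have h1 : 1 ≤ n := by omega
      push_cast [Nat.cast_sub h1]
      ring
    -- 2-UFS constraints
    have h1 : d ≤ |y - a| := by
      have := hufs a ⟨ha0, ha1⟩
      rw [hSa, Finset.card_singleton] at this
      have hrw : ((1:ℕ):ℝ) / (2*c) = d := by
        rw [hdd]; push_cast; rw [one_div]
      rwa [hrw] at this
    have h2 : (c-1)*d ≤ |y - b| := by
      have := hufs b ⟨hb0, hb1⟩
      rw [hSb, hcardb] at this
      have hrw : (c-1) / (2*c) = (c-1)*d := by
        rw [hdd, div_eq_mul_inv]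
      rwa [hrw] at this
    -- localize y
    have hylb : 2*d - δ ≤ y := by
      rcases le_abs.mp h1 with h | h
      · rw [ha_def] at h; linarith
      · exfalso; rw [ha_def] at h; linarith
    have hyub : y ≤ 2*d + δ := by
      rcases le_abs.mp h2 with h | h
      · exfalso; rw [hb_def] at h; linarith [hd]
      · rw [hb_def] at h; linarith [hd]
    -- bound the infimum from above
    have hbb : ∀ z : ℝ, BddBelow (Set.range fun i : Fin n => |z - (if i = 0 then a else b)|) := by
      intro z
      exact ⟨0, by rintro w ⟨i, rfl⟩; exact abs_nonneg _⟩
    have hinf_le : (⨅ i : Fin n, |y - (if i = 0 then a else b)|) ≤ d + 2*δ := by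
      have h0 : (if (0:Fin n) = 0 then a else b) = a := if_pos rfl
      have := ciInf_le (hbb y) (0 : Fin n)
      rw [h0] at this
      have hya : |y - a| ≤ d + 2*δ := by
        rw [abs_of_nonneg (by rw [ha_def]; linarith), ha_def]
        linarith
      linarith
    have hinf_nonneg : (0:ℝ) ≤ ⨅ i : Fin n, |y - (if i = 0 then a else b)| :=
      le_ciInf fun i => abs_nonneg _
    -- bound the supremum from below
    have hF1 : (c-1)*d - δ ≤ ⨅ i : Fin n, |(1:ℝ) - (if i = 0 then a else b)| := by
      apply le_ciInf
      intro i
      by_cases h : i = 0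
      · rw [if_pos h, abs_of_nonneg (by linarith)]
        rw [ha_def]
        linarith [hd, hcd]
      · rw [if_neg h, abs_of_nonneg (by linarith)]
        rw [hb_def]
        linarith [hd]
    have hbdd : BddAbove ((fun z => ⨅ i : Fin n, |z - (if i = 0 then a else b)|) '' Set.Icc (0:ℝ) 1) := by
      refine ⟨1, ?_⟩
      rintro v ⟨z, hz, rfl⟩
      have : |z - a| ≤ 1 := abs_le.mpr ⟨by linarith [hz.1, hz.2], by linarith [hz.1, hz.2]⟩
      calc (⨅ i : Fin n, |z - (if i = 0 then a else b)|) ≤ |z - (if (0:Fin n) = 0 then a else b)| :=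
            ciInf_le (hbb z) 0
        _ = |z - a| := by rw [if_pos rfl]
        _ ≤ 1 := this
    have hsup : (c-1)*d - δ ≤ sSup ((fun z => ⨅ i : Fin n, |z - (if i = 0 then a else b)|) '' Set.Icc (0:ℝ) 1) := by
      refine le_trans hF1 (le_csSup hbdd ?_)
      exact ⟨1, ⟨zero_le_one, le_refl 1⟩, rfl⟩
    -- combine
    refine le_trans ?_ hsup
    rcases le_or_gt (c - 1 - ε) 0 with hcoef | hcoef
    · have : (c - 1 - ε) * (⨅ i : Fin n, |y - (if i = 0 then a else b)|) ≤ 0 :=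
        mul_nonpos_of_nonpos_of_nonneg hcoef hinf_nonneg
      have h2d : 2 * d ≤ (c-1) * d := by
        have := mul_le_mul_of_nonneg_right (by linarith : (2:ℝ) ≤ c - 1) hdpos.le
        linarith
      linarith
    · have hstep : (c - 1 - ε) * (⨅ i : Fin n, |y - (if i = 0 then a else b)|)
          ≤ (c - 1 - ε) * (d + 2*δ) := by
        exact mul_le_mul_of_nonneg_left hinf_le (le_of_lt hcoef)
      refine le_trans hstep ?_
      have h2c : (0:ℝ) ≤ 2*c - 1 := by linarith
      have key : δ * (2*c - 1) ≤ ε*d - ε*d^2 := by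
        have h := mul_le_mul_of_nonneg_right hδε h2c
        have e1 : ε*d^2*(2*c-1) = ε*d*(2*c*d) - ε*d^2 := by ring
        rw [e1, hd, mul_one] at h
        exact h
      have hεd2 : 0 < ε * d^2 := by positivity
      have hεδ : 0 < ε * δ := mul_pos hε hδpos
      clear hstep hinf_le hinf_nonneg hsup hufs hbb hbdd hF1 h1 h2
      nlinarith [key, hεd2, hεδ]
end

section
/- For every n ≥ 2 and every strategyproof deterministic mechanism f : [0,1]^n → [0,1], there exist a profile x ∈ [0,1]^n and an agent i with f(x) = x_i. Consequently, for every α > 0 there is a profile x and an agent i with |f(x) − x_i| < 1/(αn); that is, no strategyproof deterministic mechanism achieves any approximation of IFS. -/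
/-- If `y` lies between `m` and `M` and is at least as far from `a` as both `m` and `M`,
then `y = M` when `a` is below the midpoint and `y = m` when above. -/
lemma two_point_aux (m M y a : ℝ) (h1 : m ≤ y) (h2 : y ≤ M)
    (hM : |M - a| ≤ |y - a|) (hm : |m - a| ≤ |y - a|) :
    (2*a < m + M → y = M) ∧ (m + M < 2*a → y = m) := by
  rcases abs_cases (y - a) with ⟨e1, _⟩ | ⟨e1, _⟩ <;>
  rcases abs_cases (M - a) with ⟨e2, _⟩ | ⟨e2, _⟩ <;>
  rcases abs_cases (m - a) with ⟨e3, _⟩ | ⟨e3, _⟩ <;>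
  rw [e1] at hM hm <;> rw [e2] at hM <;> rw [e3] at hm <;>
  exact ⟨fun h => by linarith, fun h => by linarith⟩

/-- No strategyproof deterministic mechanism achieves any approximation of IFS:
every strategyproof mechanism places the facility at some agent's location for
some profile. -/
theorem no_strategyproof_IFS :
    ∀ (n : ℕ) (f : (Fin n → ℝ) → ℝ), 2 ≤ n →
      (∀ x : Fin n → ℝ, (∀ i, x i ∈ Set.Icc (0:ℝ) 1) → f x ∈ Set.Icc (0:ℝ) 1) →
      (∀ (x : Fin n → ℝ) (i : Fin n) (x' : ℝ), (∀ j, x j ∈ Set.Icc (0:ℝ) 1) →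
        x' ∈ Set.Icc (0:ℝ) 1 →
        |f (Function.update x i x') - x i| ≤ |f x - x i|) →
      (∃ (x : Fin n → ℝ) (i : Fin n), (∀ j, x j ∈ Set.Icc (0:ℝ) 1) ∧ f x = x i) ∧
      (∀ α : ℝ, 0 < α → ∃ (x : Fin n → ℝ) (i : Fin n),
        (∀ j, x j ∈ Set.Icc (0:ℝ) 1) ∧ |f x - x i| < 1 / (α * n)) := by
  intro n f hn hrange hsp
  obtain ⟨m, rfl⟩ : ∃ m, n = m + 2 := ⟨n - 2, by omega⟩
  have h01 : (0 : Fin (m + 2)) ≠ 1 := by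
    intro h
    have := congrArg Fin.val h
    simp [Fin.val_zero, Fin.val_one] at this
  -- the two-agent restriction
  set P : ℝ → ℝ → (Fin (m+2) → ℝ) :=
    fun a b j => if j = 0 then a else if j = 1 then b else 0 with hP
  have P0 : ∀ a b, P a b 0 = a := by intro a b; simp [hP]
  have P1 : ∀ a b, P a b 1 = b := by intro a b; simp [hP, h01.symm]
  have memP : ∀ a b, a ∈ Set.Icc (0:ℝ) 1 → b ∈ Set.Icc (0:ℝ) 1 →
      ∀ j, P a b j ∈ Set.Icc (0:ℝ) 1 := by
    intro a b ha hb j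
    simp only [hP]
    split_ifs
    · exact ha
    · exact hb
    · exact ⟨le_refl 0, zero_le_one⟩
  have upd0 : ∀ a a' b, Function.update (P a b) 0 a' = P a' b := by
    intro a a' b
    funext j
    rw [Function.update_apply]
    simp only [hP]
    split_ifs <;> rfl
  have upd1 : ∀ a b b', Function.update (P a b) 1 b' = P a b' := by
    intro a b b'
    funext j
    rw [Function.update_apply]
    by_cases hj0 : j = 0
    · subst hj0; rw [if_neg h01]; simp [hP]
    · by_cases hj1 : j = 1
      · subst hj1; simp [hP, h01.symm]
      · rw [if_neg hj1]; simp [hP, hj0, hj1]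
  set F : ℝ → ℝ → ℝ := fun a b => f (P a b) with hF
  set I : Set ℝ := Set.Icc (0:ℝ) 1 with hI
  have m0 : (0:ℝ) ∈ I := ⟨le_refl 0, zero_le_one⟩
  have m1 : (1:ℝ) ∈ I := ⟨zero_le_one, le_refl 1⟩
  have rangeF : ∀ a b, a ∈ I → b ∈ I → F a b ∈ I := by
    intro a b ha hb; exact hrange _ (memP a b ha hb)
  have S1 : ∀ a b a', a ∈ I → b ∈ I → a' ∈ I → |F a' b - a| ≤ |F a b - a| := by
    intro a b a' ha hb ha'
    have := hsp (P a b) 0 a' (memP a b ha hb) ha'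
    rwa [upd0, P0] at this
  have S2 : ∀ a b b', a ∈ I → b ∈ I → b' ∈ I → |F a b' - b| ≤ |F a b - b| := by
    intro a b b' ha hb hb'
    have := hsp (P a b) 1 b' (memP a b ha hb) hb'
    rwa [upd1, P1] at this
  -- column bounds: F 1 b ≤ F a b ≤ F 0 b
  have colB : ∀ a b, a ∈ I → b ∈ I → F 1 b ≤ F a b ∧ F a b ≤ F 0 b := by
    intro a b ha hb
    have h0 := S1 0 b a m0 hb ha
    have h1 := S1 1 b a m1 hb ha
    have r1 := rangeF a b ha hb
    have r2 := rangeF 0 b m0 hb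
    have r3 := rangeF 1 b m1 hb
    rw [sub_zero, sub_zero, abs_of_nonneg r1.1, abs_of_nonneg r2.1] at h0
    rw [abs_of_nonpos (by linarith [r1.2]), abs_of_nonpos (by linarith [r3.2])] at h1
    constructor <;> linarith
  have rowB : ∀ a b, a ∈ I → b ∈ I → F a 1 ≤ F a b ∧ F a b ≤ F a 0 := by
    intro a b ha hb
    have h0 := S2 a 0 b ha m0 hb
    have h1 := S2 a 1 b ha m1 hb
    have r1 := rangeF a b ha hb
    have r2 := rangeF a 0 ha m0
    have r3 := rangeF a 1 ha m1
    rw [sub_zero, sub_zero, abs_of_nonneg r1.1, abs_of_nonneg r2.1] at h0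
    rw [abs_of_nonpos (by linarith [r1.2]), abs_of_nonpos (by linarith [r3.2])] at h1
    constructor <;> linarith
  have colForce : ∀ a b, a ∈ I → b ∈ I →
      (2*a < F 1 b + F 0 b → F a b = F 0 b) ∧ (F 1 b + F 0 b < 2*a → F a b = F 1 b) := by
    intro a b ha hb
    have hbd := colB a b ha hb
    have hM := S1 a b 0 ha hb m0
    have hm := S1 a b 1 ha hb m1
    exact two_point_aux (F 1 b) (F 0 b) (F a b) a hbd.1 hbd.2 hM hm
  have rowForce : ∀ a b, a ∈ I → b ∈ I →
      (2*b < F a 1 + F a 0 → F a b = F a 0) ∧ (F a 1 + F a 0 < 2*b → F a b = F a 1) := by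
    intro a b ha hb
    have hbd := rowB a b ha hb
    have hM := S2 a b 0 ha hb m0
    have hm := S2 a b 1 ha hb m1
    exact two_point_aux (F a 1) (F a 0) (F a b) b hbd.1 hbd.2 hM hm
  -- main existence claim
  have main : ∃ (x : Fin (m+2) → ℝ) (i : Fin (m+2)),
      (∀ j, x j ∈ Set.Icc (0:ℝ) 1) ∧ f x = x i := by
    by_contra hcon
    push_neg at hcon
    have hne1 : ∀ a b, a ∈ I → b ∈ I → F a b ≠ a := by
      intro a b ha hb
      have := hcon (P a b) 0 (memP a b ha hb)
      rwa [P0] at this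
    have hne2 : ∀ a b, a ∈ I → b ∈ I → F a b ≠ b := by
      intro a b ha hb
      have := hcon (P a b) 1 (memP a b ha hb)
      rwa [P1] at this
    -- ranges of the four key values
    have rc := rangeF 0 0 m0 m0   -- c = F 0 0
    have rd := rangeF 1 0 m1 m0   -- d = F 1 0
    have rd' := rangeF 0 1 m0 m1  -- d' = F 0 1
    have rq := rangeF 1 1 m1 m1   -- q = F 1 1
    have hc0 : F 0 0 ≠ 0 := hne1 0 0 m0 m0
    -- d < c
    have hdc : F 1 0 < F 0 0 := by
      rcases lt_or_eq_of_le (colB 1 0 m1 m0).2 with h | h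
      · exact h
      · exfalso
        have hbd := colB (F 0 0) 0 rc m0
        exact hne1 (F 0 0) 0 rc m0 (le_antisymm hbd.2 (h ▸ hbd.1))
    -- d' < c
    have hd'c : F 0 1 < F 0 0 := by
      rcases lt_or_eq_of_le (rowB 0 0 m0 m0).1 with h | h
      · exact h
      · exfalso
        have hbd := rowB 0 (F 0 0) m0 rc
        exact hne2 0 (F 0 0) m0 rc (le_antisymm hbd.2 (h.symm ▸ hbd.1))
    -- q < d
    have hqd : F 1 1 < F 1 0 := by
      rcases lt_or_eq_of_le (rowB 1 0 m1 m0).1 with h | h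
      · exact h
      · exfalso
        have hbd := rowB 1 (F 1 0) m1 rd
        exact hne2 1 (F 1 0) m1 rd (le_antisymm hbd.2 (h ▸ hbd.1))
    -- q < d'
    have hqd' : F 1 1 < F 0 1 := by
      rcases lt_or_eq_of_le (colB 1 1 m1 m1).2 with h | h
      · exact h
      · exfalso
        have hbd := colB (F 0 1) 1 rd' m1
        exact hne1 (F 0 1) 1 rd' m1 (le_antisymm hbd.2 (h ▸ hbd.1))
    -- the crossing profile
    set A : ℝ := (2 * F 1 1 + F 0 1 + F 0 0) / 4 with hA
    set B : ℝ := (F 1 1 + F 0 1 + 2 * F 0 0) / 4 with hB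
    have mA : A ∈ I := by
      constructor
      · rw [hA]; linarith [rq.1, rd'.1, rc.1]
      · rw [hA]; linarith [rq.2, rd'.2, rc.2]
    have mB : B ∈ I := by
      constructor
      · rw [hB]; linarith [rq.1, rd'.1, rc.1]
      · rw [hB]; linarith [rq.2, rd'.2, rc.2]
    -- F A 0 = F 0 0 : since 2A < F 1 0 + F 0 0
    have hA0 : F A 0 = F 0 0 := (colForce A 0 mA m0).1 (by rw [hA]; linarith)
    -- F A 1 = F 1 1 : since F 1 1 + F 0 1 < 2A
    have hA1 : F A 1 = F 1 1 := (colForce A 1 mA m1).2 (by rw [hA]; linarith)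
    -- F 0 B = F 0 0 : since 2B < F 0 1 + F 0 0
    have hB0 : F 0 B = F 0 0 := (rowForce 0 B m0 mB).1 (by rw [hB]; linarith)
    -- F 1 B = F 1 1 : since F 1 1 + F 1 0 < 2B
    have hB1 : F 1 B = F 1 1 := (rowForce 1 B m1 mB).2 (by rw [hB]; linarith)
    -- column view at (A, B): 2A < F 1 B + F 0 B = F 1 1 + F 0 0
    have e1 : F A B = F 0 B := (colForce A B mA mB).1 (by rw [hA, hB1, hB0]; linarith)
    -- row view at (A, B): F A 1 + F A 0 = F 1 1 + F 0 0 < 2B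
    have e2 : F A B = F A 1 := (rowForce A B mA mB).2 (by rw [hB, hA1, hA0]; linarith)
    rw [hB0] at e1
    rw [hA1] at e2
    linarith [e1 ▸ e2]
  refine ⟨main, ?_⟩
  intro α hα
  obtain ⟨x, i, hx, hfi⟩ := main
  refine ⟨x, i, hx, ?_⟩
  rw [hfi, sub_self, abs_zero]
  have hnpos : (0:ℝ) < (m + 2 : ℕ) := by positivity
  exact div_pos one_pos (mul_pos hα hnpos)
end

section
/- Let n = 2 and let f : [0,1]^2 → [0,1] be the mechanism f*_{2IFS}, i.e., for every reported profile x, f(x) lies in F(x) = {y ∈ [0,1] : |y − x_1| ≥ 1/4 and |y − x_2| ≥ 1/4}, f(x) maximizes ∑_i |y − x_i| over y ∈ F(x), and f(x) is the leftmost (smallest) such maximizer. Then there exists ε_0 > 0 such that for every ε ∈ (0, ε_0), the true location profile x = (1/4 − ε, 3/4 + ε) admits no pure Nash equilibrium: for every reported profile x' ∈ [0,1]^2 there exist an agent i and a deviation z ∈ [0,1] with |f(z, x'_{−i}) − x_i| > |f(x') − x_i|. -/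
lemma lemA (f : (Fin 2 → ℝ) → ℝ)
    (hfeas : ∀ x : Fin 2 → ℝ, (∀ i, x i ∈ Set.Icc (0:ℝ) 1) →
      f x ∈ Set.Icc (0:ℝ) 1 ∧ ∀ i, 1/4 ≤ |f x - x i|)
    (hopt : ∀ x : Fin 2 → ℝ, (∀ i, x i ∈ Set.Icc (0:ℝ) 1) →
      ∀ y ∈ Set.Icc (0:ℝ) 1, (∀ i, 1/4 ≤ |y - x i|) →
        ∑ i, |y - x i| ≤ ∑ i, |f x - x i|)
    (p : Fin 2 → ℝ) (hp : ∀ i, p i ∈ Set.Icc (0:ℝ) 1)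
    (h0 : p 0 = 0) (h1 : p 1 ≤ 3/4) : f p = 1 := by
  obtain ⟨⟨hf0, hf1⟩, hfd⟩ := hfeas p hp
  have hb0 : (0:ℝ) ≤ p 1 := (hp 1).1
  have e1 : |(1:ℝ) - p 0| = 1 - p 0 := abs_of_nonneg (by linarith [(hp 0).2])
  have e2 : |(1:ℝ) - p 1| = 1 - p 1 := abs_of_nonneg (by linarith)
  have hopt1 := hopt p hp 1 (by constructor <;> norm_num)
    (Fin.forall_fin_two.mpr ⟨by linarith, by linarith⟩)
  simp only [Fin.sum_univ_two] at hopt1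
  rcases abs_cases (f p - p 0) with ⟨g1, _⟩ | ⟨g1, _⟩ <;>
    rcases abs_cases (f p - p 1) with ⟨g2, _⟩ | ⟨g2, _⟩ <;> linarith

lemma lemD (f : (Fin 2 → ℝ) → ℝ)
    (hfeas : ∀ x : Fin 2 → ℝ, (∀ i, x i ∈ Set.Icc (0:ℝ) 1) →
      f x ∈ Set.Icc (0:ℝ) 1 ∧ ∀ i, 1/4 ≤ |f x - x i|)
    (hopt : ∀ x : Fin 2 → ℝ, (∀ i, x i ∈ Set.Icc (0:ℝ) 1) →
      ∀ y ∈ Set.Icc (0:ℝ) 1, (∀ i, 1/4 ≤ |y - x i|) →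
        ∑ i, |y - x i| ≤ ∑ i, |f x - x i|)
    (hleft : ∀ x : Fin 2 → ℝ, (∀ i, x i ∈ Set.Icc (0:ℝ) 1) →
      ∀ y ∈ Set.Icc (0:ℝ) 1, (∀ i, 1/4 ≤ |y - x i|) →
        (∑ i, |y - x i| = ∑ i, |f x - x i|) → f x ≤ y)
    (p : Fin 2 → ℝ) (hp : ∀ i, p i ∈ Set.Icc (0:ℝ) 1)
    (h0 : 1/4 ≤ p 0) (h1 : p 1 = 1) : f p = 0 := by
  obtain ⟨⟨hf0, hf1⟩, hfd⟩ := hfeas p hp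
  have ha0 : (0:ℝ) ≤ p 0 := (hp 0).1
  have ha1 : p 0 ≤ 1 := (hp 0).2
  have e1 : |(0:ℝ) - p 0| = p 0 := by rw [abs_of_nonpos (by linarith)]; ring
  have e2 : |(0:ℝ) - p 1| = 1 := by rw [abs_of_nonpos (by rw [h1]; norm_num), h1]; norm_num
  have hy0 : (0:ℝ) ∈ Set.Icc (0:ℝ) 1 := by constructor <;> norm_num
  have hyfeas : ∀ i : Fin 2, 1/4 ≤ |(0:ℝ) - p i| :=
    Fin.forall_fin_two.mpr ⟨by linarith, by linarith⟩
  have hopt1 := hopt p hp 0 hy0 hyfeas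
  simp only [Fin.sum_univ_two] at hopt1
  have hub : |f p - p 0| + |f p - p 1| ≤ p 0 + 1 := by
    rcases abs_cases (f p - p 0) with ⟨g1, _⟩ | ⟨g1, _⟩ <;>
      rcases abs_cases (f p - p 1) with ⟨g2, _⟩ | ⟨g2, _⟩ <;> linarith
  have heq : ∑ i, |(0:ℝ) - p i| = ∑ i, |f p - p i| := by
    simp only [Fin.sum_univ_two]; linarith
  have := hleft p hp 0 hy0 hyfeas heq
  linarith

lemma lemB (f : (Fin 2 → ℝ) → ℝ)
    (hfeas : ∀ x : Fin 2 → ℝ, (∀ i, x i ∈ Set.Icc (0:ℝ) 1) →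
      f x ∈ Set.Icc (0:ℝ) 1 ∧ ∀ i, 1/4 ≤ |f x - x i|)
    (hopt : ∀ x : Fin 2 → ℝ, (∀ i, x i ∈ Set.Icc (0:ℝ) 1) →
      ∀ y ∈ Set.Icc (0:ℝ) 1, (∀ i, 1/4 ≤ |y - x i|) →
        ∑ i, |y - x i| ≤ ∑ i, |f x - x i|)
    (hleft : ∀ x : Fin 2 → ℝ, (∀ i, x i ∈ Set.Icc (0:ℝ) 1) →
      ∀ y ∈ Set.Icc (0:ℝ) 1, (∀ i, 1/4 ≤ |y - x i|) →
        (∑ i, |y - x i| = ∑ i, |f x - x i|) → f x ≤ y)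
    (p : Fin 2 → ℝ) (hp : ∀ i, p i ∈ Set.Icc (0:ℝ) 1)
    (h1 : p 1 = 1) : f p ≤ 1/2 := by
  by_cases h0 : 1/4 ≤ p 0
  · rw [lemD f hfeas hopt hleft p hp h0 h1]; norm_num
  · push_neg at h0
    obtain ⟨⟨hf0, hf1⟩, hfd⟩ := hfeas p hp
    have ha0 : 0 ≤ p 0 := (hp 0).1
    have hy0 : p 0 + 1/4 ∈ Set.Icc (0:ℝ) 1 := by constructor <;> linarith
    have e1 : |p 0 + 1/4 - p 0| = 1/4 := by rw [abs_of_nonneg (by linarith)]; ring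
    have e2 : |p 0 + 1/4 - p 1| = p 1 - p 0 - 1/4 := by
      rw [abs_of_nonpos (by rw [h1]; linarith)]; ring
    have hyfeas : ∀ i : Fin 2, 1/4 ≤ |p 0 + 1/4 - p i| :=
      Fin.forall_fin_two.mpr ⟨by linarith, by rw [e2, h1]; linarith⟩
    have hfa : p 0 ≤ f p := by
      have := hfd 0
      rcases abs_cases (f p - p 0) with ⟨g1, _⟩ | ⟨g1, _⟩ <;> linarith
    have e3 : |f p - p 0| = f p - p 0 := abs_of_nonneg (by linarith)
    have e4 : |f p - p 1| = p 1 - f p := by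
      rw [abs_of_nonpos (by rw [h1]; linarith)]; ring
    have hopt1 := hopt p hp (p 0 + 1/4) hy0 hyfeas
    simp only [Fin.sum_univ_two] at hopt1
    have heq : ∑ i, |p 0 + 1/4 - p i| = ∑ i, |f p - p i| := by
      simp only [Fin.sum_univ_two]; rw [e1, e2, e3, e4]; linarith
    have := hleft p hp (p 0 + 1/4) hy0 hyfeas heq
    linarith

lemma lemC (f : (Fin 2 → ℝ) → ℝ)
    (hfeas : ∀ x : Fin 2 → ℝ, (∀ i, x i ∈ Set.Icc (0:ℝ) 1) →
      f x ∈ Set.Icc (0:ℝ) 1 ∧ ∀ i, 1/4 ≤ |f x - x i|)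
    (hopt : ∀ x : Fin 2 → ℝ, (∀ i, x i ∈ Set.Icc (0:ℝ) 1) →
      ∀ y ∈ Set.Icc (0:ℝ) 1, (∀ i, 1/4 ≤ |y - x i|) →
        ∑ i, |y - x i| ≤ ∑ i, |f x - x i|)
    (hleft : ∀ x : Fin 2 → ℝ, (∀ i, x i ∈ Set.Icc (0:ℝ) 1) →
      ∀ y ∈ Set.Icc (0:ℝ) 1, (∀ i, 1/4 ≤ |y - x i|) →
        (∑ i, |y - x i| = ∑ i, |f x - x i|) → f x ≤ y)
    (p : Fin 2 → ℝ) (hp : ∀ i, p i ∈ Set.Icc (0:ℝ) 1)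
    (h0 : p 0 < 1/4) (h1 : 3/4 < p 1) : f p = p 0 + 1/4 := by
  obtain ⟨⟨hf0, hf1⟩, hfd⟩ := hfeas p hp
  have ha0 : 0 ≤ p 0 := (hp 0).1
  have hb1 : p 1 ≤ 1 := (hp 1).2
  have hfa : p 0 + 1/4 ≤ f p := by
    have := hfd 0
    rcases abs_cases (f p - p 0) with ⟨g1, _⟩ | ⟨g1, _⟩ <;> linarith
  have hfb : f p ≤ p 1 - 1/4 := by
    have := hfd 1
    rcases abs_cases (f p - p 1) with ⟨g1, _⟩ | ⟨g1, _⟩ <;> linarith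
  have hy0 : p 0 + 1/4 ∈ Set.Icc (0:ℝ) 1 := by constructor <;> linarith
  have e1 : |p 0 + 1/4 - p 0| = 1/4 := by rw [abs_of_nonneg (by linarith)]; ring
  have e2 : |p 0 + 1/4 - p 1| = p 1 - p 0 - 1/4 := by
    rw [abs_of_nonpos (by linarith)]; ring
  have e3 : |f p - p 0| = f p - p 0 := abs_of_nonneg (by linarith)
  have e4 : |f p - p 1| = p 1 - f p := by rw [abs_of_nonpos (by linarith)]; ring
  have hyfeas : ∀ i : Fin 2, 1/4 ≤ |p 0 + 1/4 - p i| :=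
    Fin.forall_fin_two.mpr ⟨by linarith, by linarith⟩
  have heq : ∑ i, |p 0 + 1/4 - p i| = ∑ i, |f p - p i| := by
    simp only [Fin.sum_univ_two]; rw [e1, e2, e3, e4]; ring
  have := hleft p hp (p 0 + 1/4) hy0 hyfeas heq
  linarith

/-- For `n = 2`, the mechanism `f*_{2IFS}` (the leftmost maximizer of utilitarian
welfare among 2-IFS locations) admits no pure Nash equilibrium for the true
profile `(1/4 - ε, 3/4 + ε)` with `ε` small enough. -/
theorem no_pure_Nash_equilibrium_f2IFS (f : (Fin 2 → ℝ) → ℝ)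
    (hfeas : ∀ x : Fin 2 → ℝ, (∀ i, x i ∈ Set.Icc (0:ℝ) 1) →
      f x ∈ Set.Icc (0:ℝ) 1 ∧ ∀ i, 1/4 ≤ |f x - x i|)
    (hopt : ∀ x : Fin 2 → ℝ, (∀ i, x i ∈ Set.Icc (0:ℝ) 1) →
      ∀ y ∈ Set.Icc (0:ℝ) 1, (∀ i, 1/4 ≤ |y - x i|) →
        ∑ i, |y - x i| ≤ ∑ i, |f x - x i|)
    (hleft : ∀ x : Fin 2 → ℝ, (∀ i, x i ∈ Set.Icc (0:ℝ) 1) →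
      ∀ y ∈ Set.Icc (0:ℝ) 1, (∀ i, 1/4 ≤ |y - x i|) →
        (∑ i, |y - x i| = ∑ i, |f x - x i|) → f x ≤ y) :
    ∃ ε₀ > (0:ℝ), ∀ ε : ℝ, 0 < ε → ε < ε₀ →
      ∀ x' : Fin 2 → ℝ, (∀ i, x' i ∈ Set.Icc (0:ℝ) 1) →
        ∃ (i : Fin 2) (z : ℝ), z ∈ Set.Icc (0:ℝ) 1 ∧
          |f x' - (![1/4 - ε, 3/4 + ε] : Fin 2 → ℝ) i| <
            |f (Function.update x' i z) - (![1/4 - ε, 3/4 + ε] : Fin 2 → ℝ) i| := by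
  refine ⟨1/8, by norm_num, ?_⟩
  intro ε hε hε8 x' hx'
  have ha0 : 0 ≤ x' 0 := (hx' 0).1
  have ha1 : x' 0 ≤ 1 := (hx' 0).2
  have hb0 : 0 ≤ x' 1 := (hx' 1).1
  have hb1 : x' 1 ≤ 1 := (hx' 1).2
  obtain ⟨⟨hfx0, hfx1⟩, _⟩ := hfeas x' hx'
  have hT0 : (![1/4 - ε, 3/4 + ε] : Fin 2 → ℝ) 0 = 1/4 - ε := rfl
  have hT1 : (![1/4 - ε, 3/4 + ε] : Fin 2 → ℝ) 1 = 3/4 + ε := rfl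
  by_cases hb : x' 1 ≤ 3/4
  · -- Case 1 : b ≤ 3/4 : agent 0 can force the facility to 1 by reporting 0
    have hp0 : Function.update x' 0 0 0 = (0:ℝ) := Function.update_self 0 0 x'
    have hp1 : Function.update x' 0 0 1 = x' 1 := Function.update_of_ne (by decide : (1:Fin 2) ≠ 0) 0 x'
    have hpv : ∀ i, Function.update x' 0 0 i ∈ Set.Icc (0:ℝ) 1 :=
      Fin.forall_fin_two.mpr ⟨by rw [hp0]; constructor <;> norm_num,
        by rw [hp1]; exact hx' 1⟩
    have hfp : f (Function.update x' 0 0) = 1 :=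
      lemA f hfeas hopt _ hpv hp0 (by rw [hp1]; exact hb)
    by_cases hu1 : |f x' - (1/4 - ε)| < 3/4 + ε
    · refine ⟨0, 0, by constructor <;> norm_num, ?_⟩
      rw [hT0, hfp, abs_of_nonneg (by linarith : (0:ℝ) ≤ 1 - (1/4 - ε))]
      linarith
    · push_neg at hu1
      have hfx'1 : f x' = 1 := by
        rcases abs_cases (f x' - (1/4 - ε)) with ⟨g1, _⟩ | ⟨g1, _⟩ <;> linarith
      -- agent 1 deviates to 1, pushing the facility to at most 1/2
      have hq0 : Function.update x' 1 1 0 = x' 0 := Function.update_of_ne (by decide : (0:Fin 2) ≠ 1) 1 x'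
      have hq1 : Function.update x' 1 1 1 = (1:ℝ) := Function.update_self 1 1 x'
      have hqv : ∀ i, Function.update x' 1 1 i ∈ Set.Icc (0:ℝ) 1 :=
        Fin.forall_fin_two.mpr ⟨by rw [hq0]; exact hx' 0,
          by rw [hq1]; constructor <;> norm_num⟩
      have hfq : f (Function.update x' 1 1) ≤ 1/2 := lemB f hfeas hopt hleft _ hqv hq1
      have hfq0 : 0 ≤ f (Function.update x' 1 1) := (hfeas _ hqv).1.1
      refine ⟨1, 1, by constructor <;> norm_num, ?_⟩
      rw [hT1, hfx'1, abs_of_nonneg (by linarith : (0:ℝ) ≤ 1 - (3/4 + ε)),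
        abs_of_nonpos (by linarith : f (Function.update x' 1 1) - (3/4 + ε) ≤ 0)]
      linarith
  · push_neg at hb
    by_cases ha : 1/4 ≤ x' 0
    · -- Case 2 : b > 3/4, a ≥ 1/4 : agent 1 can force the facility to 0 by reporting 1
      have hq0 : Function.update x' 1 1 0 = x' 0 := Function.update_of_ne (by decide : (0:Fin 2) ≠ 1) 1 x'
      have hq1 : Function.update x' 1 1 1 = (1:ℝ) := Function.update_self 1 1 x'
      have hqv : ∀ i, Function.update x' 1 1 i ∈ Set.Icc (0:ℝ) 1 :=
        Fin.forall_fin_two.mpr ⟨by rw [hq0]; exact hx' 0,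
          by rw [hq1]; constructor <;> norm_num⟩
      have hfq : f (Function.update x' 1 1) = 0 :=
        lemD f hfeas hopt hleft _ hqv (by rw [hq0]; exact ha) hq1
      by_cases hu2 : |f x' - (3/4 + ε)| < 3/4 + ε
      · refine ⟨1, 1, by constructor <;> norm_num, ?_⟩
        rw [hT1, hfq, abs_of_nonpos (by linarith : (0:ℝ) - (3/4 + ε) ≤ 0)]
        linarith
      · push_neg at hu2
        have hfx'0 : f x' = 0 := by
          rcases abs_cases (f x' - (3/4 + ε)) with ⟨g1, _⟩ | ⟨g1, _⟩ <;> linarith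
        -- agent 0 deviates to 1/4 - ε, the facility moves to 1/2 - ε
        have hp0 : Function.update x' 0 (1/4 - ε) 0 = 1/4 - ε := Function.update_self 0 _ x'
        have hp1 : Function.update x' 0 (1/4 - ε) 1 = x' 1 :=
          Function.update_of_ne (by decide : (1:Fin 2) ≠ 0) 0 x'
        have hpv : ∀ i, Function.update x' 0 (1/4 - ε) i ∈ Set.Icc (0:ℝ) 1 :=
          Fin.forall_fin_two.mpr ⟨by rw [hp0]; constructor <;> linarith,
            by rw [hp1]; exact hx' 1⟩
        have hfp : f (Function.update x' 0 (1/4 - ε)) = (1/4 - ε) + 1/4 :=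
          lemC f hfeas hopt hleft _ hpv (by rw [hp0]; linarith) (by rw [hp1]; exact hb)
        refine ⟨0, 1/4 - ε, by constructor <;> linarith, ?_⟩
        rw [hT0, hfx'0, hfp, abs_of_nonpos (by linarith : (0:ℝ) - (1/4 - ε) ≤ 0),
          abs_of_nonneg (by linarith : (0:ℝ) ≤ 1/4 - ε + 1/4 - (1/4 - ε))]
        linarith
    · -- Case 3 : b > 3/4, a < 1/4 : facility sits at a + 1/4; agent 0 moves it right
      push_neg at ha
      have hfx' : f x' = x' 0 + 1/4 := lemC f hfeas hopt hleft x' hx' ha hb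
      have hp0 : Function.update x' 0 ((x' 0 + 1/4)/2) 0 = (x' 0 + 1/4)/2 :=
        Function.update_self 0 _ x'
      have hp1 : Function.update x' 0 ((x' 0 + 1/4)/2) 1 = x' 1 :=
        Function.update_of_ne (by decide : (1:Fin 2) ≠ 0) 0 x'
      have hpv : ∀ i, Function.update x' 0 ((x' 0 + 1/4)/2) i ∈ Set.Icc (0:ℝ) 1 :=
        Fin.forall_fin_two.mpr ⟨by rw [hp0]; constructor <;> linarith,
          by rw [hp1]; exact hx' 1⟩
      have hfp : f (Function.update x' 0 ((x' 0 + 1/4)/2)) = (x' 0 + 1/4)/2 + 1/4 :=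
        lemC f hfeas hopt hleft _ hpv (by rw [hp0]; linarith) (by rw [hp1]; exact hb)
      refine ⟨0, (x' 0 + 1/4)/2, by constructor <;> linarith, ?_⟩
      rw [hT0, hfx', hfp,
        abs_of_nonneg (by linarith : (0:ℝ) ≤ x' 0 + 1/4 - (1/4 - ε)),
        abs_of_nonneg (by linarith : (0:ℝ) ≤ (x' 0 + 1/4)/2 + 1/4 - (1/4 - ε))]
      linarith
end

section
/- Let n ≥ 1, let f : [0,1]^n → [0,1] be any deterministic mechanism whose output always satisfies 2-IFS with respect to the reported profile (i.e., |f(x') − x_i'| ≥ 1/(2n) for every reported profile x' and every i), and let ε ∈ (0, 1/(2n)). Then for every true profile x ∈ [0,1]^n and every reported profile x' that is a pure ε-Nash equilibrium with respect to x, we have ∑_i |f(x) − x_i| ≤ (2n/(1 − 2nε)) · ∑_i |f(x') − x_i|. In particular, the ε-price of anarchy of f*_{2IFS} and f*_{2UFS} for utilitarian welfare is at most 2n/(1 − 2nε). -/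
/-!
Agent `i` can always deviate to reporting its true location `x i`; the 2-IFS guarantee then
puts the facility at distance at least `1/(2n)` from `x i`, so at an `ε`-equilibrium every
agent already enjoys utility at least `1/(2n) - ε`, and the equilibrium welfare is at least
`(1 - 2nε)/2`. The truthful welfare is at most `n`, since all distances lie in `[0,1]`.
-/

open Finset

section

variable {ι : Type*}

def IsPureEpsNash [DecidableEq ι] (f : (ι → ℝ) → ℝ) (ε : ℝ) (x x' : ι → ℝ) : Prop :=
  ∀ i z, z ∈ Set.Icc (0:ℝ) 1 → |f (Function.update x' i z) - x i| ≤ |f x' - x i| + ε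

lemma update_mem_Icc [DecidableEq ι] {x' : ι → ℝ} (hx' : ∀ j, x' j ∈ Set.Icc (0:ℝ) 1)
    (i : ι) {z : ℝ} (hz : z ∈ Set.Icc (0:ℝ) 1) (j : ι) :
    Function.update x' i z j ∈ Set.Icc (0:ℝ) 1 := by
  rcases eq_or_ne j i with rfl | hji
  · simpa using hz
  · simpa [Function.update_of_ne hji] using hx' j

lemma sub_le_abs_sub_of_isPureEpsNash [DecidableEq ι] {f : (ι → ℝ) → ℝ} {δ ε : ℝ}
    (hf : ∀ y, (∀ j, y j ∈ Set.Icc (0:ℝ) 1) → ∀ j, δ ≤ |f y - y j|)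
    {x x' : ι → ℝ} (hx : ∀ i, x i ∈ Set.Icc (0:ℝ) 1) (hx' : ∀ i, x' i ∈ Set.Icc (0:ℝ) 1)
    (hNE : IsPureEpsNash f ε x x') (i : ι) :
    δ - ε ≤ |f x' - x i| := by
  have hfar := hf _ (update_mem_Icc hx' i (hx i)) i
  rw [Function.update_self] at hfar
  linarith [hNE i (x i) (hx i)]

lemma sum_abs_sub_le_card [Fintype ι] {y : ℝ} (hy : y ∈ Set.Icc (0:ℝ) 1)
    {x : ι → ℝ} (hx : ∀ i, x i ∈ Set.Icc (0:ℝ) 1) :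
    ∑ i, |y - x i| ≤ Fintype.card ι := by
  calc ∑ i, |y - x i| ≤ ∑ _i : ι, (1:ℝ) :=
        sum_le_sum fun i _ => abs_sub_le_of_nonneg_of_le hy.1 hy.2 (hx i).1 (hx i).2
    _ = Fintype.card ι := by simp

end

theorem eps_price_of_anarchy_upper_general (n : ℕ) (f : (Fin n → ℝ) → ℝ)
    (hf : ∀ x' : Fin n → ℝ, (∀ i, x' i ∈ Set.Icc (0:ℝ) 1) →
      f x' ∈ Set.Icc (0:ℝ) 1 ∧ ∀ i, 1 / (2 * n) ≤ |f x' - x' i|)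
    (ε : ℝ) (hε' : ε < 1 / (2 * n))
    (x : Fin n → ℝ) (hx : ∀ i, x i ∈ Set.Icc (0:ℝ) 1)
    (x' : Fin n → ℝ) (hx' : ∀ i, x' i ∈ Set.Icc (0:ℝ) 1)
    (hNE : ∀ (i : Fin n) (z : ℝ), z ∈ Set.Icc (0:ℝ) 1 →
      |f (Function.update x' i z) - x i| ≤ |f x' - x i| + ε) :
    ∑ i, |f x - x i| ≤ (2 * n / (1 - 2 * n * ε)) * ∑ i, |f x' - x i| := by
  rcases n.eq_zero_or_pos with rfl | hpos
  · simp
  have hn : (0:ℝ) < n := by exact_mod_cast hpos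
  have hgap : 0 < 1 - 2 * n * ε := by
    rw [lt_div_iff₀ (by positivity)] at hε'
    linarith
  have htruth : ∑ i, |f x - x i| ≤ n := by
    simpa using sum_abs_sub_le_card (hf x hx).1 hx
  have hequil : n * (1 / (2 * n) - ε) ≤ ∑ i, |f x' - x i| := by
    have := card_nsmul_le_sum univ _ _ fun i _ =>
      sub_le_abs_sub_of_isPureEpsNash (fun y hy => (hf y hy).2) hx hx' hNE i
    rwa [card_univ, Fintype.card_fin, nsmul_eq_mul] at this
  calc ∑ i, |f x - x i| ≤ n := htruth
    _ = (2 * n / (1 - 2 * n * ε)) * (n * (1 / (2 * n) - ε)) := by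
        rw [show (n:ℝ) * (1 / (2 * n) - ε) = (1 - 2 * n * ε) / 2 by field_simp,
          div_mul_div_cancel₀ hgap.ne']
        ring
    _ ≤ (2 * n / (1 - 2 * n * ε)) * ∑ i, |f x' - x i| := by gcongr

/-- The ε-price of anarchy for utilitarian welfare of any mechanism whose output
always satisfies 2-IFS with respect to the reported profile is at most
`2n / (1 - 2nε)` for `ε ∈ (0, 1/(2n))`. -/
theorem eps_price_of_anarchy_upper (n : ℕ) (hn : 1 ≤ n) (f : (Fin n → ℝ) → ℝ)
    (hf : ∀ x' : Fin n → ℝ, (∀ i, x' i ∈ Set.Icc (0:ℝ) 1) →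
      f x' ∈ Set.Icc (0:ℝ) 1 ∧ ∀ i, 1 / (2 * n) ≤ |f x' - x' i|)
    (ε : ℝ) (hε : 0 < ε) (hε' : ε < 1 / (2 * n))
    (x : Fin n → ℝ) (hx : ∀ i, x i ∈ Set.Icc (0:ℝ) 1)
    (x' : Fin n → ℝ) (hx' : ∀ i, x' i ∈ Set.Icc (0:ℝ) 1)
    (hNE : ∀ (i : Fin n) (z : ℝ), z ∈ Set.Icc (0:ℝ) 1 →
      |f (Function.update x' i z) - x i| ≤ |f x' - x i| + ε) :
    ∑ i, |f x - x i| ≤ (2 * n / (1 - 2 * n * ε)) * ∑ i, |f x' - x i| :=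
  eps_price_of_anarchy_upper_general n f hf ε hε' x hx x' hx' hNE
end

section
/- Let n ≥ 1, let x ∈ [0,1]^n, let n_1 = |{i : x_i ≤ 1/2}| and n_2 = n − n_1, and let α = (2 n_1 n_2 + n_2²)/(n_1² + n_2² + 4 n_1 n_2). Then for every point p ∈ [0,1], α·p + (1 − α)·(1 − p) ≥ |{i : x_i = p}|/(2n). That is, Mechanism 2, which places the facility at 0 with probability α and at 1 with probability 1 − α, satisfies 2-UFS in expectation: every group of agents at a common location p has expected distance from the facility at least (group size)/(2n). -/
/-!
The expected distance `α p + (1 - α)(1 - p)` is affine in `p`. On `[0, 1/2]` it is a convex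
combination of its values `1 - α` at `0` and `1/2` at `1/2`, and every agent located there is
among the `n₁` agents of the left half; so it suffices that `n₁ / (2n) ≤ 1 - α`, which is a
polynomial inequality in `n₁, n₂`. The right half `[1/2, 1]` is the mirror image, with `n₂` and `α`
in place of `n₁` and `1 - α`.
-/

open Finset

noncomputable def mechTwoProbZero (a b : ℝ) : ℝ :=
  (2 * a * b + b ^ 2) / (a ^ 2 + b ^ 2 + 4 * a * b)

noncomputable def mechTwoDist (a b p : ℝ) : ℝ :=
  mechTwoProbZero a b * p + (1 - mechTwoProbZero a b) * (1 - p)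

lemma one_sub_mechTwoProbZero {a b : ℝ} (h : a ^ 2 + b ^ 2 + 4 * a * b ≠ 0) :
    1 - mechTwoProbZero a b = mechTwoProbZero b a := by
  unfold mechTwoProbZero
  rw [show b ^ 2 + a ^ 2 + 4 * b * a = a ^ 2 + b ^ 2 + 4 * a * b by ring, eq_div_iff h, sub_mul,
    div_mul_cancel₀ _ h]
  ring

lemma div_le_mechTwoProbZero {a b : ℝ} (ha : 0 ≤ a) (hb : 0 ≤ b) :
    b / (2 * (a + b)) ≤ mechTwoProbZero a b := by
  unfold mechTwoProbZero
  rcases hb.eq_or_lt with rfl | hb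
  · simp only [zero_div]
    positivity
  rw [div_le_div_iff₀ (by positivity) (by positivity)]
  nlinarith [mul_nonneg (mul_nonneg ha ha) hb.le, mul_nonneg (mul_nonneg ha hb.le) hb.le,
    pow_pos hb 3]

/-- On `[0, 1/2]` the expected distance is `(1 - 2p) (1 - α) + 2p · 1/2`. -/
lemma le_mul_add_one_sub_mul_of_le_half {α p c : ℝ} (hp₀ : 0 ≤ p) (hp : p ≤ 1 / 2)
    (hc : c ≤ 1 / 2) (hcα : c ≤ 1 - α) : c ≤ α * p + (1 - α) * (1 - p) := by
  nlinarith [mul_nonneg (by linarith : 0 ≤ 1 - 2 * p) (by linarith : 0 ≤ 1 - α - c),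
    mul_nonneg hp₀ (by linarith : 0 ≤ 1 / 2 - c)]

lemma le_mul_add_one_sub_mul_of_half_le {α p c : ℝ} (hp : 1 / 2 ≤ p) (hp₁ : p ≤ 1)
    (hc : c ≤ 1 / 2) (hcα : c ≤ α) : c ≤ α * p + (1 - α) * (1 - p) := by
  have := le_mul_add_one_sub_mul_of_le_half (α := 1 - α) (by linarith : 0 ≤ 1 - p)
    (by linarith) hc (by linarith)
  linarith

section

variable {a b k p : ℝ} (ha : 0 ≤ a) (hb : 0 ≤ b) (hab : 0 < a + b)
include ha hb hab

lemma div_le_mechTwoDist_of_le_half (hk : k ≤ a) (hp₀ : 0 ≤ p) (hp : p ≤ 1 / 2) :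
    k / (2 * (a + b)) ≤ mechTwoDist a b p := by
  have hD : a ^ 2 + b ^ 2 + 4 * a * b ≠ 0 := by nlinarith [mul_nonneg ha hb]
  have hka : k / (2 * (a + b)) ≤ a / (2 * (a + b)) := by gcongr
  refine le_mul_add_one_sub_mul_of_le_half hp₀ hp (hka.trans ?_) (hka.trans ?_)
  · rw [div_le_iff₀ (by positivity)]
    linarith
  · rw [one_sub_mechTwoProbZero hD, add_comm]
    exact div_le_mechTwoProbZero hb ha

lemma div_le_mechTwoDist_of_half_le (hk : k ≤ b) (hp : 1 / 2 ≤ p) (hp₁ : p ≤ 1) :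
    k / (2 * (a + b)) ≤ mechTwoDist a b p := by
  have hkb : k / (2 * (a + b)) ≤ b / (2 * (a + b)) := by gcongr
  refine le_mul_add_one_sub_mul_of_half_le hp hp₁ (hkb.trans ?_)
    (hkb.trans (div_le_mechTwoProbZero ha hb))
  rw [div_le_iff₀ (by positivity)]
  linarith

end

open Classical in
theorem mechanism_two_satisfies_two_UFS_general (n : ℕ) (hn : 1 ≤ n) (x : Fin n → ℝ) :
    ∀ p ∈ Set.Icc (0:ℝ) 1,
      letI n1 : ℕ := (Finset.univ.filter (fun i => x i ≤ 1/2)).card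
      letI n2 : ℕ := n - n1
      letI α : ℝ := (2*n1*n2 + (n2:ℝ)^2) / ((n1:ℝ)^2 + (n2:ℝ)^2 + 4*n1*n2)
      ((Finset.univ.filter (fun i => x i = p)).card : ℝ) / (2*n) ≤
        α * p + (1 - α) * (1 - p) := by
  rintro p ⟨hp₀, hp₁⟩
  set k := #{i | x i = p}
  set n1 := #{i | x i ≤ 1 / 2}
  set n2 := n - n1
  have hsplit : n1 + #{i | ¬x i ≤ 1 / 2} = n := by
    have := card_filter_add_card_filter_not (s := univ) (fun i => x i ≤ 1 / 2)
    rwa [card_univ, Fintype.card_fin] at this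
  have hsum : (n1 : ℝ) + n2 = n := by exact_mod_cast Nat.add_sub_of_le (by omega : n1 ≤ n)
  have hpos : 0 < (n1 : ℝ) + n2 := by rw [hsum]; exact_mod_cast hn
  change (k : ℝ) / (2 * n) ≤ mechTwoDist n1 n2 p
  rw [← hsum]
  rcases le_or_gt p (1 / 2) with hp | hp
  · have hk : k ≤ n1 := card_le_card (monotone_filter_right _ fun i _ hi => hi ▸ hp)
    exact div_le_mechTwoDist_of_le_half (by positivity) (by positivity) hpos
      (by exact_mod_cast hk) hp₀ hp
  · have hk : k ≤ #{i | ¬x i ≤ 1 / 2} :=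
      card_le_card (monotone_filter_right _ fun i _ hi => hi ▸ hp.not_ge)
    exact div_le_mechTwoDist_of_half_le (by positivity) (by positivity) hpos
      (by exact_mod_cast (by omega : k ≤ n2)) hp.le hp₁

open Classical in
/-- Mechanism 2 of Cheng, Yu and Zhang (2013), which places the facility at 0 with
probability α = (2n₁n₂ + n₂²)/(n₁² + n₂² + 4n₁n₂) and at 1 with probability 1 - α,
satisfies 2-UFS in expectation. -/
theorem mechanism_two_satisfies_two_UFS (n : ℕ) (hn : 1 ≤ n) (x : Fin n → ℝ)
    (hx : ∀ i, x i ∈ Set.Icc (0:ℝ) 1) :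
    ∀ p ∈ Set.Icc (0:ℝ) 1,
      letI n1 : ℕ := (Finset.univ.filter (fun i => x i ≤ 1/2)).card
      letI n2 : ℕ := n - n1
      letI α : ℝ := (2*n1*n2 + (n2:ℝ)^2) / ((n1:ℝ)^2 + (n2:ℝ)^2 + 4*n1*n2)
      ((Finset.univ.filter (fun i => x i = p)).card : ℝ) / (2*n) ≤
        α * p + (1 - α) * (1 - p) :=
  mechanism_two_satisfies_two_UFS_general n hn x
end

section
/- Let n ≥ 1 and let x ∈ [0,1]^n with x_1 ≤ x_2 ≤ … ≤ x_n, ∑_i x_i > n/2, and x_1 < 1/(2n). Let α = (1 − 2n x_1)/(2n(1 − 2x_1)). Then: (a) α ∈ [0, 1/2] and for every i, α(1 − x_i) + (1 − α)x_i ≥ 1/(2n) (with equality for i = 1); and (b) for every β ∈ [0,1] such that β(1 − x_i) + (1 − β)x_i ≥ 1/(2n) for all i, the expected utilitarian welfare satisfies β(n − ∑_i x_i) + (1 − β)∑_i x_i ≤ α(n − ∑_i x_i) + (1 − α)∑_i x_i. Hence, in this case, the 2-IFS Randomized mechanism (placing the facility at 1 with probability α and at 0 with probability 1 − α) maximizes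 expected utilitarian welfare among all randomized mechanisms satisfying 2-IFS in expectation that are supported on {0,1}. -/
/-- Optimality of the 2-IFS Randomized mechanism in the case `∑ x_i > n/2` and
`x_1 < 1/(2n)`: the probability `α = (1 - 2n x_1)/(2n (1 - 2 x_1))` of placing the
facility at 1 satisfies 2-IFS in expectation (with equality for agent 1), and no
other probability `β` satisfying 2-IFS in expectation gives higher expected
utilitarian welfare. -/
theorem two_IFS_randomized_optimal (n : ℕ) (hn : 1 ≤ n) (x : Fin n → ℝ)
    (hx : ∀ i, x i ∈ Set.Icc (0:ℝ) 1)
    (hmono : ∀ i j : Fin n, i ≤ j → x i ≤ x j)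
    (hsum : (n : ℝ) / 2 < ∑ i, x i)
    (hx1 : x ⟨0, hn⟩ < 1 / (2 * n)) :
    letI α : ℝ := (1 - 2*n*(x ⟨0, hn⟩)) / (2*n*(1 - 2*(x ⟨0, hn⟩)))
    (α ∈ Set.Icc (0:ℝ) (1/2) ∧
      (∀ i, 1/(2*(n:ℝ)) ≤ α*(1 - x i) + (1-α)*(x i)) ∧
      α*(1 - x ⟨0, hn⟩) + (1-α)*(x ⟨0, hn⟩) = 1/(2*(n:ℝ))) ∧
    (∀ β ∈ Set.Icc (0:ℝ) 1, (∀ i, 1/(2*(n:ℝ)) ≤ β*(1 - x i) + (1-β)*(x i)) →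
      β*((n:ℝ) - ∑ i, x i) + (1-β)*(∑ i, x i) ≤
        α*((n:ℝ) - ∑ i, x i) + (1-α)*(∑ i, x i)) := by
  set x1 : ℝ := x ⟨0, hn⟩ with hx1def
  set α : ℝ := (1 - 2*(n:ℝ)*x1) / (2*(n:ℝ)*(1 - 2*x1)) with hαdef
  have hn1 : (1:ℝ) ≤ n := by exact_mod_cast hn
  have hn0 : (0:ℝ) < n := by linarith
  have hx10 : 0 ≤ x1 := (hx ⟨0, hn⟩).1
  have hnum : 0 < 1 - 2*(n:ℝ)*x1 := by
    have h2 : 2*(n:ℝ)*x1 < 2*n*(1/(2*n)) := by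
      apply mul_lt_mul_of_pos_left hx1
      positivity
    have h3 : 2*(n:ℝ)*(1/(2*n)) = 1 := by field_simp
    linarith
  have hden0 : 0 < 1 - 2*x1 := by nlinarith
  have hden : 0 < 2*(n:ℝ)*(1-2*x1) := by positivity
  have hα0 : 0 ≤ α := le_of_lt (div_pos hnum hden)
  have hαhalf : α ≤ 1/2 := by
    rw [div_le_iff₀ hden]
    nlinarith
  have hkey : α*(1-2*x1) = 1/(2*n) - x1 := by
    have hne : (2*(n:ℝ)*(1-2*x1)) ≠ 0 := ne_of_gt hden
    rw [hαdef]; field_simp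
  have heq1 : α*(1 - x1) + (1-α)*x1 = 1/(2*(n:ℝ)) := by
    have : α*(1 - x1) + (1-α)*x1 = α*(1-2*x1) + x1 := by ring
    rw [this, hkey]; ring
  refine ⟨⟨⟨hα0, hαhalf⟩, ?_, heq1⟩, ?_⟩
  · intro i
    have hle : x1 ≤ x i := by
      apply hmono
      exact Fin.mk_le_of_le_val (Nat.zero_le _)
    nlinarith [mul_nonneg (by linarith : (0:ℝ) ≤ 1 - 2*α) (by linarith : (0:ℝ) ≤ x i - x1)]
  · intro β hβ hfeas
    have h1 := hfeas ⟨0, hn⟩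
    rw [← hx1def] at h1
    have hβα : α ≤ β := by
      have hβd : β*(1-2*x1) ≥ α*(1-2*x1) := by nlinarith
      exact le_of_mul_le_mul_right (by linarith) hden0
    nlinarith [hsum]
end

section
/- For every n ≥ 1 and every profile x ∈ [0,1]^n there exists β ∈ [0,1] such that (i) β(1 − x_i) + (1 − β)x_i ≥ 1/(2n) for every agent i, and (ii) sup_{z ∈ [0,1]} ∑_i |z − x_i| ≤ (12/11) · (β(n − ∑_i x_i) + (1 − β)∑_i x_i). Moreover, the constant 12/11 is tight: there exist n and a profile x (namely n = 3, x = (0, 1, 1)) such that for every β ∈ [0,1] satisfying (i), sup_{z ∈ [0,1]} ∑_i |z − x_i| ≥ (12/11) · (β(n − ∑_i x_i) + (1 − β)∑_i x_i). Hence in the randomized setting the price of 2-IFS for utilitarian welfare is 12/11. -/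
/-!
Reflecting `x ↦ 1 - x` (with `β ↦ 1 - β`) we may assume `∑ xᵢ ≤ n / 2`, so that the optimum,
attained at an endpoint since `z ↦ ∑ |z - xᵢ|` is convex, is `n - ∑ xᵢ`. With `m = max xᵢ`, take
the largest `β` for which the agent at `m` keeps expected distance `1 / (2n)`, namely
`β = min 1 ((m - 1/(2n)) / (2m - 1))`; as `β ≥ 1/2`, agents further left are even better off.
The welfare ratio is worst when all of `∑ xᵢ` sits at `m`, where it becomes the polynomial
inequality `(n - 3)(n - 4) + (1 - m)(10n² - 21n - 12) + 22n(1 - m)² ≥ 0`; equality at `n = 3`,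
`m = 1` gives the tight profile `(1, 0, 0)`, reflected to `(0, 1, 1)`.
-/

open Finset Set

lemma abs_sub_le_of_mem_Icc {z t : ℝ} (hz : z ∈ Icc (0:ℝ) 1) (ht : t ∈ Icc (0:ℝ) 1) :
    |z - t| ≤ (1 - z) * t + z * (1 - t) := by
  obtain ⟨hz0, hz1⟩ := hz
  obtain ⟨ht0, ht1⟩ := ht
  rw [abs_le]
  constructor <;> nlinarith

lemma sum_one_sub_fin {n : ℕ} (x : Fin n → ℝ) : ∑ i, (1 - x i) = n - ∑ i, x i := by
  simp [Finset.sum_sub_distrib]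

lemma isGreatest_image_sum_abs_sub {n : ℕ} {x : Fin n → ℝ} (hx : ∀ i, x i ∈ Icc (0:ℝ) 1) :
    IsGreatest ((fun z => ∑ i, |z - x i|) '' Icc (0:ℝ) 1) (max (∑ i, x i) (n - ∑ i, x i)) := by
  refine ⟨?_, ?_⟩
  · rcases le_total (∑ i, x i) (n - ∑ i, x i) with h | h
    · refine ⟨1, right_mem_Icc.2 zero_le_one, ?_⟩
      rw [max_eq_right h, ← sum_one_sub_fin]
      exact sum_congr rfl fun i _ => abs_of_nonneg (sub_nonneg.2 (hx i).2)
    · refine ⟨0, left_mem_Icc.2 zero_le_one, ?_⟩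
      rw [max_eq_left h]
      exact sum_congr rfl fun i _ => by simp [abs_of_nonneg (hx i).1]
  · rintro _ ⟨z, hz, rfl⟩
    calc ∑ i, |z - x i| ≤ ∑ i, ((1 - z) * x i + z * (1 - x i)) :=
          sum_le_sum fun i _ => abs_sub_le_of_mem_Icc hz (hx i)
      _ = (1 - z) * ∑ i, x i + z * (n - ∑ i, x i) := by
          rw [sum_add_distrib, ← mul_sum, ← mul_sum, sum_one_sub_fin]
      _ ≤ max (∑ i, x i) (n - ∑ i, x i) := by
          nlinarith [hz.1, hz.2, le_max_left (∑ i, x i) (n - ∑ i, x i),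
            le_max_right (∑ i, x i) (n - ∑ i, x i)]

lemma welfare_ratio_at_max_location {n : ℕ} {m : ℝ} (hm : 1 - 1 / (2 * n) < m) (hm1 : m ≤ 1) :
    11 * (n - m) ≤ 12 * (m + (m - 1 / (2 * n)) / (2 * m - 1) * (n - 2 * m)) := by
  set c := 1 / (2 * (n:ℝ)) with hc_def
  have hn : (0:ℝ) < n := by
    have : 0 < c := by linarith
    linarith [one_div_pos.mp this]
  have hc : 2 * n * c = 1 := by rw [hc_def]; field_simp
  have hn1 : (1:ℝ) ≤ n := Nat.one_le_cast.mpr (Nat.cast_pos.mp hn)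
  have hm2 : 0 < 2 * m - 1 := by nlinarith
  set β := (m - c) / (2 * m - 1)
  have hβ : β * (2 * m - 1) = m - c := div_mul_cancel₀ _ hm2.ne'
  have hpoly : 0 ≤ ((n:ℝ) - 3) * (n - 4) + (1 - m) * (10 * n ^ 2 - 21 * n - 12)
      + 22 * n * (1 - m) ^ 2 := by
    have ht : 2 * n * (1 - m) < 1 := by nlinarith
    obtain rfl | rfl | h3 : n = 1 ∨ n = 2 ∨ 3 ≤ n := by
      have := Nat.cast_pos.mp hn; omega
    · norm_num at ht ⊢; nlinarith
    · norm_num at ht ⊢; nlinarith [sq_nonneg (m - 3/4)]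
    · have h3' : (3:ℝ) ≤ n := by exact_mod_cast h3
      have hprod : 0 ≤ ((n:ℝ) - 3) * (n - 4) := by
        rcases h3.eq_or_lt with rfl | h4
        · norm_num
        · have : (4:ℝ) ≤ n := by exact_mod_cast h4
          nlinarith
      nlinarith [sq_nonneg (1 - m)]
  have hform : (n * (2 * m - 1)) * (12 * (m + β * (n - 2 * m)) - 11 * (n - m))
      = ((n:ℝ) - 3) * (n - 4) + (1 - m) * (10 * n ^ 2 - 21 * n - 12) + 22 * n * (1 - m) ^ 2 := by
    linear_combination 12 * n * (n - 2 * m) * hβ - 6 * (n - 2 * m) * hc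
  nlinarith [mul_pos hn hm2, hpoly]

/-- Both sides are affine in `S`, and at `S = N / 2` the welfare is `N / 2` whatever `β`. -/
lemma welfare_ratio_of_le_sum {N S m β : ℝ} (hN : 0 ≤ N) (hmS : m ≤ S) (hSN : 2 * S ≤ N)
    (h : 11 * (N - m) ≤ 12 * (m + β * (N - 2 * m))) :
    11 * (N - S) ≤ 12 * (S + β * (N - 2 * S)) := by
  rcases le_total (24 * β) 23 with hβ | hβ
  · nlinarith
  · nlinarith

lemma exists_fair_placement_of_two_mul_sum_le {n : ℕ} {x : Fin n → ℝ} (hn : 1 ≤ n)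
    (hx : ∀ i, x i ∈ Icc (0:ℝ) 1) (hS : 2 * ∑ i, x i ≤ n) :
    ∃ β ∈ Icc (0:ℝ) 1,
      (∀ i, 1 / (2 * (n:ℝ)) ≤ β * (1 - x i) + (1 - β) * x i) ∧
      n - ∑ i, x i ≤ 12 / 11 * (β * (n - ∑ i, x i) + (1 - β) * ∑ i, x i) := by
  set c := 1 / (2 * (n:ℝ))
  have hS0 : 0 ≤ ∑ i, x i := sum_nonneg fun i _ => (hx i).1
  obtain ⟨j, -, hj⟩ := exists_max_image univ x (univ_nonempty_iff.2 ⟨⟨0, hn⟩⟩)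
  rcases le_or_gt (x j) (1 - c) with hm | hm
  · refine ⟨1, right_mem_Icc.2 zero_le_one, fun i => ?_, ?_⟩
    · linarith [hj i (mem_univ i)]
    · linarith
  · have hc : c ≤ 1 / 2 := by
      have : (1:ℝ) ≤ n := Nat.one_le_cast.mpr hn
      unfold c; gcongr; linarith
    have hm2 : 0 < 2 * x j - 1 := by linarith
    set β := (x j - c) / (2 * x j - 1)
    have hβ : β * (2 * x j - 1) = x j - c := div_mul_cancel₀ _ hm2.ne'
    have hβ_half : 1 / 2 ≤ β := by
      rw [le_div_iff₀ hm2]; linarith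
    have hβ_one : β ≤ 1 := by
      rw [div_le_one hm2]; linarith
    refine ⟨β, ⟨by linarith, hβ_one⟩, fun i => ?_, ?_⟩
    · have hfair : β * (1 - x i) + (1 - β) * x i - c = (x j - x i) * (2 * β - 1) := by
        linear_combination -hβ
      nlinarith [hj i (mem_univ i)]
    · have := welfare_ratio_of_le_sum (Nat.cast_nonneg n)
        (single_le_sum (fun i _ => (hx i).1) (mem_univ j)) hS
        (welfare_ratio_at_max_location hm (hx j).2)
      linarith

lemma exists_fair_placement {n : ℕ} {x : Fin n → ℝ} (hn : 1 ≤ n)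
    (hx : ∀ i, x i ∈ Icc (0:ℝ) 1) :
    ∃ β ∈ Icc (0:ℝ) 1,
      (∀ i, 1 / (2 * (n:ℝ)) ≤ β * (1 - x i) + (1 - β) * x i) ∧
      max (∑ i, x i) (n - ∑ i, x i) ≤
        12 / 11 * (β * (n - ∑ i, x i) + (1 - β) * ∑ i, x i) := by
  rcases le_total (2 * ∑ i, x i) n with hS | hS
  · obtain ⟨β, hβ, hfair, hwelfare⟩ := exists_fair_placement_of_two_mul_sum_le hn hx hS
    exact ⟨β, hβ, hfair, max_le (by linarith) hwelfare⟩
  · have hx' : ∀ i, 1 - x i ∈ Icc (0:ℝ) 1 := fun i =>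
      ⟨by linarith [(hx i).2], by linarith [(hx i).1]⟩
    have hS' : 2 * ∑ i, (1 - x i) ≤ n := by rw [sum_one_sub_fin]; linarith
    obtain ⟨β, ⟨hβ0, hβ1⟩, hfair, hwelfare⟩ := exists_fair_placement_of_two_mul_sum_le hn hx' hS'
    refine ⟨1 - β, ⟨by linarith, by linarith⟩, fun i => by linarith [hfair i], ?_⟩
    rw [sum_one_sub_fin] at hwelfare
    exact max_le (by linarith) (by linarith)

/-- In the randomized setting the price of 2-IFS for utilitarian welfare is 12/11:
for every profile some two-point randomized placement satisfying 2-IFS in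
expectation achieves at least 11/12 of the optimal utilitarian welfare, and this
constant is tight. -/
theorem randomized_two_IFS_price_of_fairness :
    (∀ (n : ℕ) (x : Fin n → ℝ), 1 ≤ n → (∀ i, x i ∈ Set.Icc (0:ℝ) 1) →
      ∃ β ∈ Set.Icc (0:ℝ) 1,
        (∀ i, 1/(2*(n:ℝ)) ≤ β*(1 - x i) + (1-β)*(x i)) ∧
        sSup ((fun z => ∑ i, |z - x i|) '' Set.Icc (0:ℝ) 1) ≤
          (12/11) * (β*((n:ℝ) - ∑ i, x i) + (1-β)*(∑ i, x i))) ∧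
    (∃ (n : ℕ) (x : Fin n → ℝ), 1 ≤ n ∧ (∀ i, x i ∈ Set.Icc (0:ℝ) 1) ∧
      ∀ β ∈ Set.Icc (0:ℝ) 1,
        (∀ i, 1/(2*(n:ℝ)) ≤ β*(1 - x i) + (1-β)*(x i)) →
        (12/11) * (β*((n:ℝ) - ∑ i, x i) + (1-β)*(∑ i, x i)) ≤
          sSup ((fun z => ∑ i, |z - x i|) '' Set.Icc (0:ℝ) 1)) := by
  have hx₀ : ∀ i, (![0, 1, 1] : Fin 3 → ℝ) i ∈ Icc (0:ℝ) 1 := by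
    intro i; fin_cases i <;> norm_num
  refine ⟨fun n x hn hx => ?_, ⟨3, ![0, 1, 1], by norm_num, hx₀, fun β _ hfair => ?_⟩⟩
  · rw [(isGreatest_image_sum_abs_sub hx).csSup_eq]
    exact exists_fair_placement hn hx
  · rw [(isGreatest_image_sum_abs_sub hx₀).csSup_eq]
    have hsum : ∑ i, (![0, 1, 1] : Fin 3 → ℝ) i = 2 := by simp [Fin.sum_univ_three]; norm_num
    have hβ : 1 / 6 ≤ β := by convert hfair 0 using 1 <;> norm_num
    rw [hsum]
    norm_num
    linarith
end

section
/- A 2-PF solution always exists: for every n ≥ 1 and every profile x ∈ [0,1]^n there exists a facility location y ∈ [0,1] such that for every nonempty set S of agents, letting r = max_{i ∈ S} x_i − min_{i ∈ S} x_i, we have |y − x_i| ≥ |S|/(2n) − r for every i ∈ S. -/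
/-!
Call `y` sparse if every closed interval `I ∋ y` contains at most `2n |I|` agents. A sparse `y`
is 2-PF: for `i ∈ S` the hull of `S ∪ {y}` contains `S` and has length at most
`r + |y - x i|`. If no point of `[0,1]` were sparse, slightly enlarging the witnessing intervals
and using compactness would give an irredundant finite cover of `[0,1]` by open intervals, each
containing more than `2n` times its length in agents. An irredundant cover by intervals has
multiplicity at most two, so these intervals hold at most `2n` agents counted with
multiplicity, while their total length is at least `1`.
-/

open Finset MeasureTheory Set

variable {ι κ α : Type*}

theorem card_filter_mem_Ioo_le_two_of_minimal [LinearOrder α] {K : Set α} {l r : κ → α}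
    {F : Finset κ} (hF : Minimal (fun G : Finset κ ↦ K ⊆ ⋃ k ∈ G, Ioo (l k) (r k)) F) (z : α) :
    #{k ∈ F | z ∈ Ioo (l k) (r k)} ≤ 2 := by
  classical
  set Fz := {k ∈ F | z ∈ Ioo (l k) (r k)}
  by_contra! h
  obtain ⟨A, hA, hAmin⟩ := Fz.exists_min_image l (card_pos.mp (by omega))
  obtain ⟨B, hB, hBmax⟩ := Fz.exists_max_image r (card_pos.mp (by omega))
  obtain ⟨C, hC, hCB⟩ := (Fz.erase A).exists_mem_ne (by rw [card_erase_of_mem hA]; omega) B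
  obtain ⟨hCA, hCFz⟩ := mem_erase.mp hC
  obtain ⟨hAF, hzA⟩ := mem_filter.mp hA
  obtain ⟨hBF, hzB⟩ := mem_filter.mp hB
  -- the intervals reaching furthest left and furthest right through `z` already cover `C`
  have hC_sub : Ioo (l C) (r C) ⊆ Ioo (l A) (r A) ∪ Ioo (l B) (r B) := by
    rw [Ioo_union_Ioo' (hzB.1.trans hzA.2) (hzA.1.trans hzB.2)]
    exact Ioo_subset_Ioo (min_le_of_left_le (hAmin C hCFz)) (le_max_of_le_right (hBmax C hCFz))
  refine hF.not_prop_of_lt (erase_ssubset (mem_filter.mp hCFz).1) fun w hw ↦ ?_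
  obtain ⟨k, hk, hwk⟩ := mem_iUnion₂.mp (hF.prop hw)
  by_cases hkC : k = C
  · subst hkC
    rcases hC_sub hwk with hwA | hwB
    · exact mem_biUnion (mem_erase.mpr ⟨Ne.symm hCA, hAF⟩) hwA
    · exact mem_biUnion (mem_erase.mpr ⟨Ne.symm hCB, hBF⟩) hwB
  · exact mem_biUnion (mem_erase.mpr ⟨hkC, hk⟩) hwk

theorem sum_card_filter_mem_Ioo_le_of_minimal [Fintype ι] [LinearOrder α] (x : ι → α)
    {K : Set α} {l r : κ → α} {F : Finset κ}
    (hF : Minimal (fun G : Finset κ ↦ K ⊆ ⋃ k ∈ G, Ioo (l k) (r k)) F) :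
    ∑ k ∈ F, #{i | x i ∈ Ioo (l k) (r k)} ≤ 2 * Fintype.card ι :=
  calc ∑ k ∈ F, #{i | x i ∈ Ioo (l k) (r k)}
      = ∑ i, #{k ∈ F | x i ∈ Ioo (l k) (r k)} := by simp only [card_filter]; exact sum_comm
    _ ≤ ∑ _i : ι, 2 := sum_le_sum fun i _ ↦ card_filter_mem_Ioo_le_two_of_minimal hF (x i)
    _ = 2 * Fintype.card ι := by simp [mul_comm]

theorem sub_le_sum_of_Icc_subset_biUnion_Ioo {a b : ℝ} {l r : κ → ℝ} {F : Finset κ}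
    (hlr : ∀ k ∈ F, l k ≤ r k) (h : Icc a b ⊆ ⋃ k ∈ F, Ioo (l k) (r k)) :
    b - a ≤ ∑ k ∈ F, (r k - l k) := by
  have hvol := (measure_mono (μ := volume) h).trans (measure_biUnion_finset_le F _)
  simp only [Real.volume_Icc, Real.volume_Ioo] at hvol
  rwa [← ENNReal.ofReal_sum_of_nonneg (fun k hk ↦ sub_nonneg.mpr (hlr k hk)),
    ENNReal.ofReal_le_ofReal_iff (sum_nonneg fun k hk ↦ sub_nonneg.mpr (hlr k hk))] at hvol

theorem not_Icc_subset_biUnion_Ioo_of_lt_card [Fintype ι] (x : ι → ℝ) {a b : ℝ} (hab : a ≤ b)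
    {l r : κ → ℝ} (hlr : ∀ k, l k < r k)
    (hdense : ∀ k, 2 * Fintype.card ι * (r k - l k) < (b - a) * #{i | x i ∈ Ioo (l k) (r k)})
    (F : Finset κ) : ¬ Icc a b ⊆ ⋃ k ∈ F, Ioo (l k) (r k) := by
  intro hF
  obtain ⟨G, -, hG⟩ :=
    exists_minimal_le_of_wellFoundedLT (fun G ↦ Icc a b ⊆ ⋃ k ∈ G, Ioo (l k) (r k)) F hF
  have hG_ne : G.Nonempty := by
    obtain ⟨k, hk, -⟩ := mem_iUnion₂.mp (hG.prop (left_mem_Icc.mpr hab))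
    exact ⟨k, hk⟩
  have hlen := sub_le_sum_of_Icc_subset_biUnion_Ioo (fun k _ ↦ (hlr k).le) hG.prop
  have hcount : (∑ k ∈ G, #{i | x i ∈ Ioo (l k) (r k)} : ℝ) ≤ 2 * Fintype.card ι := by
    exact_mod_cast sum_card_filter_mem_Ioo_le_of_minimal x hG
  have hcard_nonneg : (0 : ℝ) ≤ 2 * Fintype.card ι := by positivity
  have hcontra := calc
    2 * Fintype.card ι * ∑ k ∈ G, (r k - l k)
      < (b - a) * ∑ k ∈ G, (#{i | x i ∈ Ioo (l k) (r k)} : ℝ) := by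
        simpa only [mul_sum] using sum_lt_sum_of_nonempty hG_ne fun k _ ↦ hdense k
    _ ≤ (b - a) * (2 * Fintype.card ι) := mul_le_mul_of_nonneg_left hcount (sub_nonneg.mpr hab)
    _ ≤ 2 * Fintype.card ι * ∑ k ∈ G, (r k - l k) := by
        rw [mul_comm]; exact mul_le_mul_of_nonneg_left hlen hcard_nonneg
  exact lt_irrefl _ hcontra

theorem exists_pos_lt_card_Ioo_of_lt_card_Icc [Fintype ι] (x : ι → ℝ) {c d s t : ℝ}
    (hd : 0 ≤ d) (h : c * (t - s) < d * #{i | x i ∈ Icc s t}) :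
    ∃ ε > 0, c * (t + ε - (s - ε)) < d * #{i | x i ∈ Ioo (s - ε) (t + ε)} := by
  obtain ⟨ε, hε, hlt⟩ := exists_pos_mul_lt (sub_pos.mpr h) (2 * c)
  have hmono : (#{i | x i ∈ Icc s t} : ℝ) ≤ #{i | x i ∈ Ioo (s - ε) (t + ε)} := by
    gcongr with i
    exact Icc_subset_Ioo (by linarith) (by linarith)
  refine ⟨ε, hε, ?_⟩
  nlinarith [mul_le_mul_of_nonneg_left hmono hd]

theorem exists_mem_Icc_forall_card_Icc_le [Fintype ι] (x : ι → ℝ) {a b : ℝ} (hab : a ≤ b) :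
    ∃ y ∈ Icc a b, ∀ s t, s ≤ y → y ≤ t →
      (b - a) * #{i | x i ∈ Icc s t} ≤ 2 * Fintype.card ι * (t - s) := by
  by_contra! h
  have hdense : ∀ y : Icc a b, ∃ s t : ℝ, s < y ∧ (y : ℝ) < t ∧
      2 * Fintype.card ι * (t - s) < (b - a) * #{i | x i ∈ Ioo s t} := by
    rintro ⟨y, hy⟩
    obtain ⟨s, t, hsy, hyt, hst⟩ := h y hy
    obtain ⟨ε, hε, hlt⟩ := exists_pos_lt_card_Ioo_of_lt_card_Icc x (sub_nonneg.mpr hab) hst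
    exact ⟨s - ε, t + ε, by linarith, by linarith, hlt⟩
  choose l r hl hr hlr using hdense
  obtain ⟨F, hF⟩ := isCompact_Icc.elim_finite_subcover (fun y ↦ Ioo (l y) (r y))
    (fun _ ↦ isOpen_Ioo) fun y hy ↦ mem_iUnion.mpr ⟨⟨y, hy⟩, hl ⟨y, hy⟩, hr ⟨y, hy⟩⟩
  exact not_Icc_subset_biUnion_Ioo_of_lt_card x hab (fun y ↦ (hl y).trans (hr y)) hlr F hF

theorem max_sub_min_le_sub_add_abs_sub {y m u M : ℝ} (hm : m ≤ u) (hM : u ≤ M) :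
    max y M - min y m ≤ M - m + |y - u| := by
  rcases min_cases y m with h | h <;> rcases max_cases y M with h' | h' <;>
    rcases abs_cases (y - u) with h'' | h'' <;> linarith

theorem two_PF_exists_general (n : ℕ) (x : Fin n → ℝ) :
    ∃ y ∈ Set.Icc (0:ℝ) 1, ∀ (S : Finset (Fin n)) (hS : S.Nonempty), ∀ i ∈ S,
      (S.card : ℝ)/(2*n) - (S.sup' hS x - S.inf' hS x) ≤ |y - x i| := by
  obtain ⟨y, hy, hsparse⟩ := exists_mem_Icc_forall_card_Icc_le x zero_le_one
  refine ⟨y, hy, fun S hS i hi ↦ ?_⟩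
  set m := S.inf' hS x
  set M := S.sup' hS x
  have hS_sub : S ⊆ ({j | x j ∈ Icc (min y m) (max y M)} : Finset (Fin n)) := fun j hj ↦
    mem_filter.mpr ⟨mem_univ j, min_le_of_right_le (inf'_le x hj),
      le_max_of_le_right (le_sup' x hj)⟩
  have hcard : (#S : ℝ) ≤ 2 * n * (max y M - min y m) := by
    have hI := hsparse _ _ (min_le_left y m) (le_max_left y M)
    rw [sub_zero, one_mul, Fintype.card_fin] at hI
    exact (Nat.cast_le.mpr (Finset.card_le_card hS_sub)).trans hI
  have hn : (0 : ℝ) < 2 * n := by have := i.pos; positivity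
  linarith [(div_le_iff₀' hn).mpr hcard,
    max_sub_min_le_sub_add_abs_sub (y := y) (inf'_le x hi) (le_sup' x hi)]

/-- A 2-PF solution always exists. -/
theorem two_PF_exists (n : ℕ) (hn : 1 ≤ n) (x : Fin n → ℝ)
    (hx : ∀ i, x i ∈ Set.Icc (0:ℝ) 1) :
    ∃ y ∈ Set.Icc (0:ℝ) 1, ∀ (S : Finset (Fin n)) (hS : S.Nonempty), ∀ i ∈ S,
      (S.card : ℝ)/(2*n) - (S.sup' hS x - S.inf' hS x) ≤ |y - x i| :=
  two_PF_exists_general n x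
end

section
/- In the hybrid model, an H-UFS solution always exists: for every n ≥ 1, every partition of the n agents into a set C of classic agents and a set O of obnoxious agents, and every profile x ∈ [0,1]^n, there exists a facility location y ∈ [0,1] such that for every point p ∈ [0,1]: |y − p| ≤ 1 − |{i ∈ C : x_i = p}|/n, and |y − p| ≥ |{i ∈ O : x_i = p}|/(2n). -/
open Classical in
/-- In the hybrid model, an H-UFS solution always exists: there is a facility
location that is within distance `1 - |S_C|/n` of every group of classic agents
at a common point and at distance at least `|S_O|/(2n)` from every group of
obnoxious agents at a common point. -/
theorem hybrid_H_UFS_exists (n : ℕ) (hn : 1 ≤ n) (C O : Finset (Fin n))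
    (hunion : C ∪ O = Finset.univ) (hdisj : Disjoint C O)
    (x : Fin n → ℝ) (hx : ∀ i, x i ∈ Set.Icc (0:ℝ) 1) :
    ∃ y ∈ Set.Icc (0:ℝ) 1, ∀ p ∈ Set.Icc (0:ℝ) 1,
      |y - p| ≤ 1 - ((C.filter (fun i => x i = p)).card : ℝ)/n ∧
      ((O.filter (fun i => x i = p)).card : ℝ)/(2*n) ≤ |y - p| := by
  have hn0 : (0:ℝ) < n := by exact_mod_cast hn
  have hCO : C.card + O.card = n := by
    have h1 := Finset.card_union_of_disjoint hdisj
    rw [hunion, Finset.card_univ, Fintype.card_fin] at h1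
    omega
  have hCle : ∀ p : ℝ, ((C.filter (fun i => x i = p)).card : ℝ) ≤ C.card := by
    intro p; exact_mod_cast Finset.card_filter_le C _
  -- the feasible interval from classic constraints
  set SL : Finset ℝ :=
    insert 0 (C.image (fun i => x i - 1 + ((C.filter (fun k => x k = x i)).card : ℝ) / n))
    with hSL
  set SR : Finset ℝ :=
    insert 1 (C.image (fun i => x i + 1 - ((C.filter (fun k => x k = x i)).card : ℝ) / n))
    with hSR
  have hSLne : SL.Nonempty := ⟨0, Finset.mem_insert_self _ _⟩
  have hSRne : SR.Nonempty := ⟨1, Finset.mem_insert_self _ _⟩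
  set L := SL.max' hSLne with hLdef
  set R := SR.min' hSRne with hRdef
  have hpair : ∀ i ∈ C, ∀ j ∈ C, x i ≠ x j →
      ((C.filter (fun k => x k = x i)).card : ℝ)
        + ((C.filter (fun k => x k = x j)).card : ℝ) ≤ C.card := by
    intro i hi j hj hne
    have hd : Disjoint (C.filter (fun k => x k = x i)) (C.filter (fun k => x k = x j)) := by
      rw [Finset.disjoint_left]
      intro k hk1 hk2
      exact hne (by rw [← (Finset.mem_filter.mp hk1).2, (Finset.mem_filter.mp hk2).2])
    have h : (C.filter (fun k => x k = x i)).card + (C.filter (fun k => x k = x j)).card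
        ≤ C.card := by
      rw [← Finset.card_union_of_disjoint hd]
      exact Finset.card_le_card (by
        intro k hk
        rcases Finset.mem_union.mp hk with h | h <;> exact (Finset.mem_filter.mp h).1)
    exact_mod_cast h
  have key : ∀ a ∈ SL, ∀ b ∈ SR, 1 - (C.card : ℝ)/n ≤ b - a := by
    intro a ha b hb
    have hCn : (C.card : ℝ) ≤ n := by
      exact_mod_cast (Finset.card_le_card (C.subset_univ)).trans_eq (by simp)
    rcases Finset.mem_insert.mp ha with rfl | ha <;>
      rcases Finset.mem_insert.mp hb with rfl | hb
    · have : (0:ℝ) ≤ (C.card : ℝ)/n := by positivity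
      linarith
    · obtain ⟨j, hj, rfl⟩ := Finset.mem_image.mp hb
      have h1 := (hx j).1
      have h3 : ((C.filter (fun k => x k = x j)).card : ℝ)/n ≤ (C.card : ℝ)/n :=
        div_le_div_of_nonneg_right (hCle (x j)) hn0.le
      linarith
    · obtain ⟨i, hi, rfl⟩ := Finset.mem_image.mp ha
      have h1 := (hx i).2
      have h3 : ((C.filter (fun k => x k = x i)).card : ℝ)/n ≤ (C.card : ℝ)/n :=
        div_le_div_of_nonneg_right (hCle (x i)) hn0.le
      linarith
    · obtain ⟨i, hi, rfl⟩ := Finset.mem_image.mp ha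
      obtain ⟨j, hj, rfl⟩ := Finset.mem_image.mp hb
      by_cases hij : x i = x j
      · rw [hij]
        have h3 : ((C.filter (fun k => x k = x j)).card : ℝ) ≤ n := le_trans (hCle _) hCn
        have h4 : ((C.filter (fun k => x k = x j)).card : ℝ)/n ≤ (C.card : ℝ)/n :=
          div_le_div_of_nonneg_right (hCle (x j)) hn0.le
        have h5 : ((C.filter (fun k => x k = x j)).card : ℝ)/n ≤ 1 := by
          rw [div_le_one hn0]; exact h3
        linarith
      · have h0 := hpair i hi j hj hij
        have h1 := (hx i).2
        have h2 := (hx j).1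
        have h3 : (((C.filter (fun k => x k = x i)).card : ℝ)
            + ((C.filter (fun k => x k = x j)).card : ℝ))/n ≤ (C.card : ℝ)/n :=
          div_le_div_of_nonneg_right h0 hn0.le
        have h4 : ((C.filter (fun k => x k = x i)).card : ℝ)/n
            + ((C.filter (fun k => x k = x j)).card : ℝ)/n
            = (((C.filter (fun k => x k = x i)).card : ℝ)
              + ((C.filter (fun k => x k = x j)).card : ℝ))/n := by ring
        linarith
  have hLmem := SL.max'_mem hSLne
  have hRmem := SR.min'_mem hSRne
  have hRL : 1 - (C.card : ℝ)/n ≤ R - L := key L hLmem R hRmem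
  have hOn : 1 - (C.card : ℝ)/n = (O.card : ℝ)/n := by
    field_simp
    push_cast [← hCO]
    ring
  have hL0 : 0 ≤ L := Finset.le_max' _ 0 (Finset.mem_insert_self _ _)
  have hR1 : R ≤ 1 := Finset.min'_le _ 1 (Finset.mem_insert_self _ _)
  have hOnn : (0:ℝ) ≤ (O.card : ℝ)/n := by positivity
  have hLR : L ≤ R := by rw [hOn] at hRL; linarith
  -- forbidden region
  set U : Set ℝ := ⋃ p ∈ (O.image x),
    Set.Ioo (p - ((O.filter (fun k => x k = p)).card : ℝ)/(2*n))
            (p + ((O.filter (fun k => x k = p)).card : ℝ)/(2*n)) with hU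
  have hvol : MeasureTheory.volume U ≤ ENNReal.ofReal ((O.card : ℝ)/n) := by
    calc MeasureTheory.volume U
        ≤ ∑ p ∈ O.image x, MeasureTheory.volume
            (Set.Ioo (p - ((O.filter (fun k => x k = p)).card : ℝ)/(2*n))
                     (p + ((O.filter (fun k => x k = p)).card : ℝ)/(2*n))) :=
          MeasureTheory.measure_biUnion_finset_le _ _
      _ = ∑ p ∈ O.image x, ENNReal.ofReal (((O.filter (fun k => x k = p)).card : ℝ)/n) := by
          apply Finset.sum_congr rfl
          intro p _
          rw [Real.volume_Ioo]
          congr 1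
          ring
      _ = ENNReal.ofReal (∑ p ∈ O.image x, ((O.filter (fun k => x k = p)).card : ℝ)/n) := by
          rw [ENNReal.ofReal_sum_of_nonneg]
          intro p _; positivity
      _ = ENNReal.ofReal ((O.card : ℝ)/n) := by
          congr 1
          rw [← Finset.sum_div]
          congr 1
          rw [Finset.card_eq_sum_card_image x O]
          push_cast
          rfl
  -- there is a feasible point
  have hex : ∃ y ∈ Set.Icc L R, y ∉ U := by
    by_contra h
    push_neg at h
    have hsub : Set.Icc L R ⊆ U := fun z hz => h z hz
    have hLU : L ∈ U := hsub ⟨le_refl L, hLR⟩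
    rw [hU] at hLU
    simp only [Set.mem_iUnion, Set.mem_Ioo] at hLU
    obtain ⟨p, hp, h1, h2⟩ := hLU
    set r := ((O.filter (fun k => x k = p)).card : ℝ)/(2*n) with hr
    have hIoc : Set.Ioc (p - r) R ⊆ U := by
      intro z hz
      rcases lt_or_ge z L with hzL | hzL
      · rw [hU]
        simp only [Set.mem_iUnion, Set.mem_Ioo]
        exact ⟨p, hp, hz.1, lt_trans hzL h2⟩
      · exact hsub ⟨hzL, hz.2⟩
    have hmono := MeasureTheory.measure_mono (μ := MeasureTheory.volume) hIoc
    rw [Real.volume_Ioc] at hmono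
    have hfin : ENNReal.ofReal (R - (p - r)) ≤ ENNReal.ofReal ((O.card : ℝ)/n) :=
      le_trans hmono hvol
    have h3 : R - (p - r) ≤ (O.card : ℝ)/n := by
      have := (ENNReal.ofReal_le_ofReal_iff hOnn).mp hfin
      linarith
    rw [hOn] at hRL
    linarith
  obtain ⟨y, hy, hyU⟩ := hex
  refine ⟨y, ⟨le_trans hL0 hy.1, le_trans hy.2 hR1⟩, ?_⟩
  intro p hp
  constructor
  · -- classic constraint
    by_cases h0 : (C.filter (fun i => x i = p)).card = 0
    · rw [h0]
      simp only [Nat.cast_zero, zero_div, sub_zero]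
      rw [abs_le]
      constructor <;>
        · have h1 := hp.1; have h2 := hp.2
          have h3 := le_trans hL0 hy.1
          have h4 := le_trans hy.2 hR1
          linarith
    · obtain ⟨i, hi⟩ := Finset.card_pos.mp (Nat.pos_of_ne_zero h0)
      have hiC := (Finset.mem_filter.mp hi).1
      have hxi : x i = p := (Finset.mem_filter.mp hi).2
      have hmemL : p - 1 + ((C.filter (fun k => x k = p)).card : ℝ)/n ∈ SL := by
        rw [hSL]
        apply Finset.mem_insert_of_mem
        apply Finset.mem_image.mpr
        exact ⟨i, hiC, by rw [hxi]⟩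
      have hmemR : p + 1 - ((C.filter (fun k => x k = p)).card : ℝ)/n ∈ SR := by
        rw [hSR]
        apply Finset.mem_insert_of_mem
        apply Finset.mem_image.mpr
        exact ⟨i, hiC, by rw [hxi]⟩
      have hLlb : p - 1 + ((C.filter (fun k => x k = p)).card : ℝ)/n ≤ L :=
        Finset.le_max' _ _ hmemL
      have hRub : R ≤ p + 1 - ((C.filter (fun k => x k = p)).card : ℝ)/n :=
        Finset.min'_le _ _ hmemR
      have h1 := hy.1; have h2 := hy.2
      rw [abs_le]
      constructor <;> linarith
  · -- obnoxious constraint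
    by_cases h0 : (O.filter (fun i => x i = p)).card = 0
    · rw [h0]
      simp only [Nat.cast_zero, zero_div]
      exact abs_nonneg _
    · obtain ⟨i, hi⟩ := Finset.card_pos.mp (Nat.pos_of_ne_zero h0)
      have hiO := (Finset.mem_filter.mp hi).1
      have hxi : x i = p := (Finset.mem_filter.mp hi).2
      have hpmem : p ∈ O.image x := Finset.mem_image.mpr ⟨i, hiO, hxi⟩
      have hnot : y ∉ Set.Ioo (p - ((O.filter (fun k => x k = p)).card : ℝ)/(2*n))
          (p + ((O.filter (fun k => x k = p)).card : ℝ)/(2*n)) := by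
        intro hmem
        apply hyU
        rw [hU]
        simp only [Set.mem_iUnion]
        exact ⟨p, hpmem, hmem⟩
      simp only [Set.mem_Ioo, not_and_or, not_lt] at hnot
      rcases hnot with h | h <;> rcases abs_cases (y - p) with ⟨heq, _⟩ | ⟨heq, _⟩ <;>
        linarith
end
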